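/- arXiv:math/0211004 — 6 statements merged into one kernel-verified Lean document; each statement's English description precedes it below -/
import Mathlib

section
/- Let D be a division ring containing ℚ that is finite-dimensional as a ℚ-vector space, and let O be an order in D, i.e., a subring of D that is finitely generated as a ℤ-module and spans D over ℚ. Let A be a finitely generated free abelian group equipped with a left O-module structure compatible with its ℤ-module structure. Suppose f : A → A is an endomorphism of A as an additive group such that for every a ∈ A there exists an element f_a ∈ O with f(a) = f_a • a. Then there exists a single element c ∈ O such that f(a) = c • a for all a ∈ A. -/
open Polynomial in
/-- A nonconstant integer polynomial takes values of arbitrarily large absolute value. -/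
private lemma aux_poly_unbounded (q : Polynomial ℤ) (hq : q.natDegree ≠ 0) (B : ℤ) :
    ∃ n : ℤ, B < |q.eval n| := by
  by_contra h
  push_neg at h
  have hfin : ∀ v : ℤ, {n : ℤ | (q - C v).IsRoot n}.Finite := by
    intro v
    apply Polynomial.finite_setOf_isRoot
    intro h0
    apply hq
    have hq' : q = C v := by
      have := sub_eq_zero.mp h0
      exact this
    rw [hq', natDegree_C]
  have hsub : (Set.univ : Set ℤ) ⊆
      ⋃ v ∈ (Finset.Icc (-B) B : Finset ℤ), {n : ℤ | (q - C v).IsRoot n} := by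
    intro n _
    have h1 := h n
    have h2 : q.eval n ∈ (Finset.Icc (-B) B : Finset ℤ) := by
      rw [Finset.mem_Icc]
      constructor
      · linarith [(abs_le.mp h1).1]
      · linarith [(abs_le.mp h1).2]
    apply Set.mem_biUnion h2
    simp [Polynomial.IsRoot]
  have hfin2 : (Set.univ : Set ℤ).Finite := by
    refine Set.Finite.subset (Set.Finite.biUnion (Finset.Icc (-B) B).finite_toSet
      (fun v _ => hfin v)) hsub
  exact Set.infinite_univ hfin2

/-- Clearing denominators in the rational span of a subring. -/
private lemma aux_clear (D : Type*) [DivisionRing D] [Algebra ℚ D] (O : Subring D)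
    {x : D} (hx : x ∈ Submodule.span ℚ (O : Set D)) :
    ∃ m : ℤ, m ≠ 0 ∧ (m : D) * x ∈ O := by
  induction hx using Submodule.span_induction with
  | mem y hy => exact ⟨1, one_ne_zero, by simpa using hy⟩
  | zero => exact ⟨1, one_ne_zero, by simpa using O.zero_mem⟩
  | add y z _ _ ihy ihz =>
    obtain ⟨m, hm, h1⟩ := ihy
    obtain ⟨k, hk, h2⟩ := ihz
    refine ⟨m * k, mul_ne_zero hm hk, ?_⟩
    have key : ((m * k : ℤ) : D) * (y + z) = k • ((m : D) * y) + m • ((k : D) * z) := by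
      rw [← zsmul_eq_mul, smul_add]
      congr 1
      · rw [← zsmul_eq_mul, smul_smul, mul_comm m k]
      · rw [← zsmul_eq_mul, smul_smul]
    rw [key]
    exact add_mem (zsmul_mem h1 k) (zsmul_mem h2 m)
  | smul a y _ ihy =>
    obtain ⟨m, hm, h1⟩ := ihy
    refine ⟨(a.den : ℤ) * m, mul_ne_zero (Int.natCast_ne_zero.mpr a.den_nz) hm, ?_⟩
    have key : (((a.den : ℤ) * m : ℤ) : D) * (a • y) = a.num • ((m : D) * y) := by
      calc (((a.den : ℤ) * m : ℤ) : D) * (a • y)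
          = ((a.den : ℤ) * m : ℤ) • (a • y) := (zsmul_eq_mul _ _).symm
        _ = (((a.den : ℤ) * m : ℤ) : ℚ) • (a • y) := (Int.cast_smul_eq_zsmul ℚ _ _).symm
        _ = ((((a.den : ℤ) * m : ℤ) : ℚ) * a) • y := smul_smul _ _ _
        _ = (((a.num * m : ℤ) : ℚ)) • y := by
            congr 1
            push_cast
            linear_combination (m : ℚ) * Rat.den_mul_eq_num a
        _ = ((a.num * m : ℤ)) • y := Int.cast_smul_eq_zsmul ℚ _ _
        _ = a.num • ((m : ℤ) • y) := mul_smul _ _ _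
        _ = a.num • ((m : D) * y) := by rw [zsmul_eq_mul y m]
    rw [key]
    exact zsmul_mem h1 a.num

set_option maxHeartbeats 1000000

/-- **Integral rigidity lemma** (Khare–Prasad, Lemma 1).
Let `D` be a division ring containing `ℚ`, finite-dimensional over `ℚ`, and let
`O` be an order in `D` (a subring that is finitely generated as a `ℤ`-module and
spans `D` over `ℚ`).  Let `A` be a finitely generated free abelian group with a
left `O`-module structure.  If `f : A → A` is an endomorphism of the additive
group of `A` such that each value `f a` is of the form `f_a • a` for some
`f_a ∈ O`, then `f` is multiplication by a single element of `O`. -/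
theorem stmt0 (D : Type*) [DivisionRing D] [Algebra ℚ D] [FiniteDimensional ℚ D]
    (O : Subring D) (hOfg : Module.Finite ℤ O)
    (hOspan : Submodule.span ℚ (O : Set D) = ⊤)
    (A : Type*) [AddCommGroup A] [Module O A]
    [Module.Free ℤ A] [Module.Finite ℤ A]
    (f : A →+ A) (hf : ∀ a : A, ∃ c : O, f a = c • a) :
    ∃ c : O, ∀ a : A, f a = c • a := by
  classical
  haveI := hOfg
  haveI : CharZero D := charZero_of_injective_algebraMap (algebraMap ℚ D).injective
  -- O is torsion-free, hence free over ℤ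
  haveI : NoZeroSMulDivisors ℤ O := by
    constructor
    intro n x h
    have h2 : n • (x : D) = 0 := by
      have := congrArg (Subtype.val) h
      simpa using this
    rcases smul_eq_zero.mp h2 with h3 | h3
    · exact Or.inl h3
    · exact Or.inr (by exact_mod_cast h3)
  haveI : Module.Free ℤ O := Module.free_of_finite_type_torsion_free'
  -- A is torsion-free
  haveI : NoZeroSMulDivisors ℤ A := by
    constructor
    intro n x h
    by_cases hn : n = 0
    · exact Or.inl hn
    · right
      let bA := Module.Free.chooseBasis ℤ A
      have h2 : n • bA.repr x = 0 := by rw [← map_zsmul, h, map_zero]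
      have h3 : bA.repr x = 0 := by
        ext i
        have := DFunLike.congr_fun h2 i
        simp only [Finsupp.smul_apply, Finsupp.coe_zero, Pi.zero_apply, smul_eq_zero] at this
        simp only [Finsupp.coe_zero, Pi.zero_apply]
        tauto
      simpa using bA.repr.map_eq_zero_iff.mp h3
  -- elementary facts about O
  have hcoe : ∀ x : O, (x : D) = 0 → x = 0 := by
    intro x h; exact_mod_cast h
  have hdom : ∀ x y : O, x * y = 0 → x = 0 ∨ y = 0 := by
    intro x y h
    have h2 : (x : D) * (y : D) = 0 := by exact_mod_cast congrArg (Subtype.val) h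
    rcases mul_eq_zero.mp h2 with h3 | h3
    · exact Or.inl (hcoe _ h3)
    · exact Or.inr (hcoe _ h3)
  haveI : Nontrivial O := ⟨1, 0, by
    intro h
    have : ((1 : O) : D) = ((0 : O) : D) := congrArg _ h
    simp at this⟩
  -- pseudo-inverses in O
  have pinv : ∀ c : O, c ≠ 0 → ∃ (c' : O) (m : ℤ), m ≠ 0 ∧ c' * c = (m : O) := by
    intro c hc
    have hcD : (c : D) ≠ 0 := fun h => hc (hcoe _ h)
    obtain ⟨m, hm, hmem⟩ := aux_clear D O (x := ((c : D))⁻¹)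
      (by rw [hOspan]; exact Submodule.mem_top)
    refine ⟨⟨(m : D) * ((c : D))⁻¹, hmem⟩, m, hm, ?_⟩
    apply Subtype.ext
    push_cast
    rw [mul_assoc, inv_mul_cancel₀ hcD, mul_one]
  -- no zero smul divisors for the O-action on A
  have key0 : ∀ (c : O) (a : A), c • a = 0 → c = 0 ∨ a = 0 := by
    intro c a h
    by_cases hc : c = 0
    · exact Or.inl hc
    right
    obtain ⟨c', m, hm, hcc⟩ := pinv c hc
    have h2 : (m : O) • a = 0 := by rw [← hcc, mul_smul, h, smul_zero]
    rw [Int.cast_smul_eq_zsmul] at h2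
    rcases smul_eq_zero.mp h2 with h3 | h3
    · exact absurd h3 hm
    · exact h3
  -- the integral norm on O
  set ι := Module.Free.ChooseBasisIndex ℤ O with hι
  let b : Module.Basis ι ℤ O := Module.Free.chooseBasis ℤ O
  haveI : Nonempty ι := b.index_nonempty
  set N : O → ℤ := fun c => LinearMap.det (LinearMap.mulLeft ℤ c) with hNdef
  have Nmul : ∀ x y : O, N (x * y) = N x * N y := by
    intro x y
    simp only [hNdef]
    rw [LinearMap.mulLeft_mul ℤ O x y, LinearMap.det_comp]
  have N0 : N (0 : O) = 0 := by
    simp only [hNdef]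
    rw [LinearMap.mulLeft_zero_eq_zero ℤ O]
    exact LinearMap.det_zero' b
  have Nne : ∀ x : O, x ≠ 0 → N x ≠ 0 := by
    intro x hx hdet
    simp only [hNdef] at hdet
    rw [← LinearMap.det_toMatrix b] at hdet
    obtain ⟨v, hv, hmv⟩ := (Matrix.exists_mulVec_eq_zero_iff).mpr hdet
    set y : O := b.repr.symm (Finsupp.equivFunOnFinite.symm v) with hy
    have hyv : ⇑(b.repr y) = v := by
      rw [hy, LinearEquiv.apply_symm_apply]
      rfl
    have hy0 : y ≠ 0 := by
      intro h
      apply hv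
      rw [← hyv, h, map_zero]
      rfl
    have hrepr := LinearMap.toMatrix_mulVec_repr b b (LinearMap.mulLeft ℤ x) y
    rw [hyv, hmv] at hrepr
    have hxy : x * y = 0 := by
      have h5 : b.repr (x * y) = 0 := by
        apply DFunLike.coe_injective
        simp only [Finsupp.coe_zero]
        simpa using hrepr.symm
      simpa using b.repr.map_eq_zero_iff.mp h5
    rcases hdom _ _ hxy with h | h
    · exact hx h
    · exact hy0 h
  -- unboundedness of the norm along n ↦ n + e
  have hpoly : ∀ e : O, ∀ B : ℤ, 0 ≤ B →
      ∃ n : ℤ, ((n : O) + e ≠ 0) ∧ B < |N ((n : O) + e)| := by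
    intro e B hB
    set E := LinearMap.toMatrix b b (LinearMap.mulLeft ℤ e) with hE
    set q := Matrix.charpoly (-E) with hq
    have hdeg : q.natDegree ≠ 0 := by
      rw [hq, Matrix.charpoly_natDegree_eq_dim]
      exact Fintype.card_ne_zero
    have heval : ∀ n : ℤ, q.eval n = N ((n : O) + e) := by
      intro n
      have e1 : q.eval n = ((Matrix.charmatrix (-E)).map (Polynomial.evalRingHom n)).det := by
        rw [hq, Matrix.charpoly, ← Polynomial.coe_evalRingHom, RingHom.map_det,
          RingHom.mapMatrix_apply]
      have e2 : (Matrix.charmatrix (-E)).map (Polynomial.evalRingHom n)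
          = Matrix.diagonal (fun _ => n) + E := by
        ext i j
        by_cases h : i = j
        · subst h
          simp [Matrix.charmatrix_apply_eq]
        · simp [Matrix.charmatrix_apply_ne _ _ _ h, Matrix.diagonal_apply_ne _ h]
      have e3 : LinearMap.toMatrix b b (LinearMap.mulLeft ℤ ((n : O) + e))
          = Matrix.diagonal (fun _ => n) + E := by
        ext i j
        rw [Matrix.add_apply, LinearMap.toMatrix_apply, hE, LinearMap.toMatrix_apply,
          LinearMap.mulLeft_apply, LinearMap.mulLeft_apply, add_mul, map_add, Finsupp.add_apply]
        congr 1
        have h4 : (n : O) * b j = n • b j := by rw [← Int.cast_smul_eq_zsmul O, smul_eq_mul]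
        rw [h4, map_zsmul, Finsupp.smul_apply, Module.Basis.repr_self]
        by_cases h : i = j
        · subst h; simp
        · simp [Finsupp.single_apply, Ne.symm h, Matrix.diagonal_apply_ne _ h]
      rw [e1, e2]
      simp only [hNdef]
      rw [← LinearMap.det_toMatrix b (LinearMap.mulLeft ℤ ((n : O) + e)), e3]
    obtain ⟨n, hn⟩ := aux_poly_unbounded q hdeg B
    rw [heval n] at hn
    refine ⟨n, ?_, hn⟩
    intro h0
    rw [h0, N0] at hn
    simp at hn
    omega
  -- main computation: dependent pair
  have dep : ∀ (a bb : A) (e : O) (m : ℤ), a ≠ 0 → e ≠ 0 → m ≠ 0 → e • a = m • bb →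
      ∀ (ca cb : O), f a = ca • a → f bb = cb • bb → cb = ca := by
    intro a bb e m ha he hm heq ca cb hca hcb
    by_contra hne
    have hw : (cb - ca) * e ≠ 0 := by
      intro h
      rcases hdom _ _ h with h1 | h1
      · exact hne (sub_eq_zero.mp h1)
      · exact he h1
    set w := (cb - ca) * e with hwdef
    obtain ⟨n, hg, hgt⟩ := hpoly e (|N w|) (abs_nonneg _)
    set g := (n : O) + e with hgdef
    obtain ⟨cu, hcu⟩ := hf (g • a)
    have hfe : f (e • a) = (cb * e) • a := by
      rw [heq, map_zsmul, hcb, smul_comm, ← heq, ← mul_smul]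
    have hfg : f (g • a) = ((n : O) * ca + cb * e) • a := by
      have hsplit : g • a = n • a + e • a := by
        rw [hgdef, add_smul, Int.cast_smul_eq_zsmul]
      rw [hsplit, map_add, map_zsmul, hca, hfe, add_smul]
      congr 1
      rw [mul_smul, Int.cast_smul_eq_zsmul]
    have heqO : cu * g = (n : O) * ca + cb * e := by
      have h0 : (cu * g - ((n : O) * ca + cb * e)) • a = 0 := by
        rw [sub_smul, mul_smul, ← hcu, hfg, sub_self]
      rcases key0 _ _ h0 with h1 | h1
      · exact sub_eq_zero.mp h1
      · exact absurd h1 ha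
    have hkey : (cu - ca) * g = w := by
      have hcomm : ca * (n : O) = (n : O) * ca := ((Int.cast_commute n ca).eq).symm
      calc (cu - ca) * g = cu * g - ca * g := sub_mul _ _ _
        _ = ((n : O) * ca + cb * e) - ((n : O) * ca + ca * e) := by
            rw [heqO, hgdef, mul_add, hcomm]
        _ = cb * e - ca * e := add_sub_add_left_eq_sub _ _ _
        _ = w := (sub_mul _ _ _).symm
    have h1 : N (cu - ca) * N g = N w := by rw [← Nmul, hkey]
    have hNcu : N (cu - ca) ≠ 0 := by
      intro h
      exact Nne w hw (by rw [← h1, h, zero_mul])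
    have h2 : |N g| ≤ |N w| := by
      calc |N g| = 1 * |N g| := (one_mul _).symm
        _ ≤ |N (cu - ca)| * |N g| := by
            apply mul_le_mul_of_nonneg_right _ (abs_nonneg _)
            exact Int.one_le_abs (by exact_mod_cast hNcu)
        _ = |N w| := by rw [← abs_mul, h1]
    exact absurd hgt (not_lt.mpr h2)
  -- any two nonzero elements have equal scalars
  have pair : ∀ (a bb : A), a ≠ 0 → bb ≠ 0 → ∀ ca cb : O,
      f a = ca • a → f bb = cb • bb → ca = cb := by
    intro a bb ha hb ca cb hca hcb
    by_cases hind : ∀ c c' : O, c • a + c' • bb = 0 → c = 0 ∧ c' = 0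
    · obtain ⟨cu, hcu⟩ := hf (a + bb)
      have h0 : (cu - ca) • a + (cu - cb) • bb = 0 := by
        rw [sub_smul, sub_smul]
        have h1 : cu • a + cu • bb = ca • a + cb • bb := by
          rw [← smul_add, ← hcu, map_add, hca, hcb]
        rw [sub_add_sub_comm, h1, sub_self]
      obtain ⟨h1, h2⟩ := hind _ _ h0
      rw [sub_eq_zero] at h1 h2
      rw [← h1, ← h2]
    · push_neg at hind
      obtain ⟨c, c', hcc, hne⟩ := hind
      have hc' : c' ≠ 0 := by
        rintro rfl
        rw [zero_smul, add_zero] at hcc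
        rcases key0 _ _ hcc with h | h
        · exact hne h (rfl)
        · exact ha h
      have hc : c ≠ 0 := by
        rintro rfl
        rw [zero_smul, zero_add] at hcc
        rcases key0 _ _ hcc with h | h
        · exact hne rfl h
        · exact hb h
      obtain ⟨c'', m, hm, hcc'⟩ := pinv c' hc'
      have hc'' : c'' ≠ 0 := by
        rintro rfl
        rw [zero_mul] at hcc'
        have : (m : O) = 0 := hcc'.symm
        rw [show ((m : ℤ) : O) = 0 ↔ (m : ℤ) = 0 from Int.cast_eq_zero] at this
        exact hm this
      have he : -(c'' * c) ≠ 0 := by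
        intro h
        rcases hdom _ _ (neg_eq_zero.mp h) with h1 | h1
        · exact hc'' h1
        · exact hc h1
      have heq2 : (-(c'' * c)) • a = m • bb := by
        have h1 : c' • bb = -(c • a) := by
          rw [eq_neg_iff_add_eq_zero, add_comm]
          exact hcc
        calc (-(c'' * c)) • a = -(c'' • (c • a)) := by rw [neg_smul, mul_smul]
          _ = c'' • (-(c • a)) := (smul_neg _ _).symm
          _ = c'' • (c' • bb) := by rw [h1]
          _ = (c'' * c') • bb := (mul_smul _ _ _).symm
          _ = (m : O) • bb := by rw [hcc']
          _ = m • bb := Int.cast_smul_eq_zsmul _ _ _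
      exact (dep a bb (-(c'' * c)) m ha he hm heq2 ca cb hca hcb).symm
  -- conclusion
  by_cases htriv : ∀ a : A, a = 0
  · exact ⟨0, fun a => by rw [htriv a, map_zero, smul_zero]⟩
  · push_neg at htriv
    obtain ⟨a0, ha0⟩ := htriv
    obtain ⟨c, hc⟩ := hf a0
    refine ⟨c, fun a => ?_⟩
    by_cases ha : a = 0
    · rw [ha, map_zero, smul_zero]
    · obtain ⟨ca, hca⟩ := hf a
      rw [hca, pair a0 a ha0 ha c ca hc hca]
end

section
/- Let G be a group generated by a finite set of r elements, and let M be a G-module whose underlying abelian group is finite and can be generated by s elements. Suppose that the first group cohomology H¹(G, M) is annihilated by a positive integer e (i.e., e·x = 0 for every x ∈ H¹(G, M)). Then H¹(G, M) is a finite abelian group of order at most e^{rs}. -/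
open groupCohomology

universe u

/-- An `e`-torsion abelian group generated by a finite set `V` has cardinality
at most `e ^ V.card`. -/
lemma aux_card_le_of_torsion {Q : Type*} [AddCommGroup Q] (e : ℕ) (he : 0 < e)
    (htor : ∀ q : Q, e • q = 0)
    (V : Finset Q) (hgen : AddSubgroup.closure (V : Set Q) = ⊤) :
    Nat.card Q ≤ e ^ V.card := by
  obtain ⟨d, rfl⟩ : ∃ d, e = d + 1 := ⟨e - 1, by omega⟩
  letI : Module (ZMod (d + 1)) Q := AddCommMonoid.zmodModule htor
  have hspan : Submodule.span (ZMod (d + 1)) (V : Set Q) = ⊤ := by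
    rw [Submodule.eq_top_iff']
    intro q
    have h1 : AddSubgroup.closure (V : Set Q) ≤
        (Submodule.span (ZMod (d + 1)) (V : Set Q)).toAddSubgroup :=
      (AddSubgroup.closure_le _).2 Submodule.subset_span
    exact h1 (hgen ▸ AddSubgroup.mem_top q)
  have hsur : Function.Surjective
      (Finsupp.linearCombination (ZMod (d + 1)) (Subtype.val : ↥V → Q)) := by
    rw [← LinearMap.range_eq_top, Finsupp.range_linearCombination,
      Subtype.range_val_subtype, Finset.setOf_mem]
    exact hspan
  have hsur2 : Function.Surjective (fun c : (↥V → ZMod (d + 1)) =>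
      Finsupp.linearCombination (ZMod (d + 1)) (Subtype.val : ↥V → Q)
        (Finsupp.equivFunOnFinite.symm c)) :=
    hsur.comp Finsupp.equivFunOnFinite.symm.surjective
  calc Nat.card Q ≤ Nat.card (↥V → ZMod (d + 1)) :=
        Nat.card_le_card_of_surjective _ hsur2
    _ = Nat.card (ZMod (d + 1)) ^ Nat.card ↥V := Nat.card_fun
    _ = (d + 1) ^ V.card := by rw [Nat.card_zmod, Nat.card_eq_finsetCard]

/-- For an endomorphism of a finite abelian group, the quotient by the range
has the same cardinality as the kernel. -/
lemma aux_card_quot_eq {Z : Type*} [AddCommGroup Z] [Finite Z] (f : Z →+ Z) :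
    Nat.card (Z ⧸ f.range) = Nat.card f.ker := by
  have h1 : Nat.card Z = Nat.card (Z ⧸ f.range) * Nat.card f.range :=
    AddSubgroup.card_eq_card_quotient_mul_card_addSubgroup f.range
  have h2 : Nat.card Z = Nat.card (Z ⧸ f.ker) * Nat.card f.ker :=
    AddSubgroup.card_eq_card_quotient_mul_card_addSubgroup f.ker
  have h3 : Nat.card (Z ⧸ f.ker) = Nat.card f.range :=
    Nat.card_congr (QuotientAddGroup.quotientKerEquivRange f).toEquiv
  have hpos : 0 < Nat.card f.range := Nat.card_pos
  rw [h3] at h2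
  rw [h2] at h1
  exact Nat.eq_of_mul_eq_mul_right hpos (by linarith)

/-- Multiplication by `e` as an additive group endomorphism. -/
def nsmulHom (e : ℕ) (Z : Type*) [AddCommGroup Z] : Z →+ Z :=
  AddMonoidHom.mk' (fun z => e • z) (fun a b => smul_add e a b)

@[simp] lemma nsmulHom_apply (e : ℕ) {Z : Type*} [AddCommGroup Z] (z : Z) :
    nsmulHom e Z z = e • z := rfl

section Coc
variable {G M : Type} [Group G] [AddCommGroup M] [DistribMulAction G M]

/-- Restriction of a 1-cocycle to a finite subset of the group. -/
noncomputable def cocycleRes (S : Finset G) :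
    cocycles₁ (Rep.ofDistribMulAction ℤ G M) →+ (↥S → M) :=
  AddMonoidHom.mk' (fun f g => f g.1) (fun _ _ => rfl)

lemma cocycleRes_nsmul (S : Finset G) (n : ℕ)
    (f : cocycles₁ (Rep.ofDistribMulAction ℤ G M)) :
    cocycleRes S (n • f) = n • cocycleRes S f :=
  map_nsmul _ _ _

lemma aux_cocycle_vanish (S : Finset G) (hSgen : Subgroup.closure (S : Set G) = ⊤)
    (f : cocycles₁ (Rep.ofDistribMulAction ℤ G M))
    (hf : ∀ g ∈ S, f g = 0) (g : G) : f g = 0 := by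
  have hg : g ∈ Subgroup.closure (S : Set G) := hSgen ▸ Subgroup.mem_top g
  induction hg using Subgroup.closure_induction with
  | mem x hx => exact hf x hx
  | one => exact cocycles₁_map_one f
  | mul x y hx hy ihx ihy =>
      have hmul := (mem_cocycles₁_iff
        (A := Rep.ofDistribMulAction ℤ G M) (f : G → M)).1 f.2 x y
      rw [hmul, ihx, ihy, map_zero, add_zero]
  | inv x hx ihx =>
      have h := cocycles₁_map_inv f x
      rw [ihx, neg_zero] at h
      change (x • (show M from f x⁻¹) : M) = 0 at h
      have h2 := congrArg (fun m : M => x⁻¹ • m) h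
      exact (smul_eq_zero_iff_eq (β := M) x).1 h

lemma cocycleRes_injective (S : Finset G)
    (hSgen : Subgroup.closure (S : Set G) = ⊤) :
    Function.Injective (cocycleRes (M := M) S) := by
  have h0 : ∀ f : cocycles₁ (Rep.ofDistribMulAction ℤ G M),
      cocycleRes S f = 0 → f = 0 := by
    intro f hf
    refine cocycles₁_ext fun g => aux_cocycle_vanish S hSgen f ?_ g
    intro g hg
    exact congrFun hf ⟨g, hg⟩
  intro a b hab
  have := h0 (a - b) (by rw [map_sub, hab, sub_self])
  exact sub_eq_zero.1 this

end Coc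

/-- Let `G` be a group generated by `r` elements and `M` a `G`-module whose
underlying abelian group is finite and generated by `s` elements.  If
`H¹(G, M)` is annihilated by a positive integer `e`, then `H¹(G, M)` is a
finite abelian group of order at most `e ^ (r * s)`. -/
theorem stmt3 (G M : Type) [Group G] [AddCommGroup M]
    [DistribMulAction G M] [Finite M]
    (r s : ℕ)
    (S : Finset G) (hScard : S.card = r) (hSgen : Subgroup.closure (S : Set G) = ⊤)
    (T : Finset M) (hTcard : T.card = s) (hTgen : AddSubgroup.closure (T : Set M) = ⊤)
    (e : ℕ) (he : 0 < e)
    (hann : ∀ x : H1 (Rep.ofDistribMulAction ℤ G M), e • x = 0) :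
    Finite (H1 (Rep.ofDistribMulAction ℤ G M)) ∧
      Nat.card (H1 (Rep.ofDistribMulAction ℤ G M)) ≤ e ^ (r * s) := by
  classical
  have hinj := cocycleRes_injective (M := M) S hSgen
  haveI : Finite (cocycles₁ (Rep.ofDistribMulAction ℤ G M)) :=
    Finite.of_injective _ hinj
  have hπ : Function.Surjective (H1π (Rep.ofDistribMulAction ℤ G M)) :=
    (ModuleCat.epi_iff_surjective _).1 inferInstance
  haveI hFin : Finite (H1 (Rep.ofDistribMulAction ℤ G M)) := Finite.of_surjective _ hπ
  refine ⟨hFin, ?_⟩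
  -- `e` times a cocycle is a coboundary
  have hB : ∀ z : cocycles₁ (Rep.ofDistribMulAction ℤ G M),
      ⇑(e • z) ∈ coboundaries₁ (Rep.ofDistribMulAction ℤ G M) := by
    intro z
    rw [← H1π_eq_zero_iff, map_nsmul]
    exact hann _
  set fe := nsmulHom e (cocycles₁ (Rep.ofDistribMulAction ℤ G M)) with hfe
  -- H¹ is a surjective image of Z¹/eZ¹
  have HN : fe.range ≤
      ((H1π (Rep.ofDistribMulAction ℤ G M)).hom.toAddMonoidHom).ker := by
    rintro x ⟨z, rfl⟩
    rw [AddMonoidHom.mem_ker, LinearMap.toAddMonoidHom_coe, hfe, nsmulHom_apply]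
    exact (H1π_eq_zero_iff _).2 (hB z)
  have hsurj : Function.Surjective (QuotientAddGroup.lift fe.range
      ((H1π (Rep.ofDistribMulAction ℤ G M)).hom.toAddMonoidHom) HN) := by
    intro x
    obtain ⟨z, rfl⟩ := hπ x
    exact ⟨QuotientAddGroup.mk z, rfl⟩
  have step1 : Nat.card (H1 (Rep.ofDistribMulAction ℤ G M)) ≤
      Nat.card (cocycles₁ (Rep.ofDistribMulAction ℤ G M) ⧸ fe.range) :=
    Nat.card_le_card_of_surjective _ hsurj
  have step2 : Nat.card (cocycles₁ (Rep.ofDistribMulAction ℤ G M) ⧸ fe.range)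
      = Nat.card fe.ker := aux_card_quot_eq fe
  -- the kernel of multiplication by `e` on cocycles embeds in `S → M[e]`
  have step3 : Nat.card fe.ker ≤ Nat.card (↥S → {m : M // e • m = 0}) := by
    refine Nat.card_le_card_of_injective
      (fun z g => ⟨cocycleRes S z.1 g, ?_⟩) ?_
    · have hz : e • z.1 = 0 := AddMonoidHom.mem_ker.1 z.2
      have h2 : cocycleRes S (e • z.1) g = e • cocycleRes S z.1 g := by
        rw [cocycleRes_nsmul]; rfl
      rw [hz, map_zero] at h2
      exact h2.symm ▸ rfl
    · intro z z' h
      apply Subtype.ext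
      apply hinj
      funext g
      exact congrArg Subtype.val (congrFun h g)
  have step4 : Nat.card (↥S → {m : M // e • m = 0})
      = Nat.card {m : M // e • m = 0} ^ r := by
    rw [Nat.card_fun, Nat.card_eq_finsetCard, hScard]
  -- bound on the e-torsion of M
  set fM := nsmulHom e M with hfM
  have step5 : Nat.card {m : M // e • m = 0} ≤ e ^ s := by
    have h1 : Nat.card {m : M // e • m = 0} = Nat.card fM.ker :=
      Nat.card_congr (Equiv.subtypeEquivRight fun m => by
        rw [AddMonoidHom.mem_ker, hfM, nsmulHom_apply])
    have h2 : Nat.card fM.ker = Nat.card (M ⧸ fM.range) :=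
      (aux_card_quot_eq fM).symm
    have htor : ∀ q : M ⧸ fM.range, e • q = 0 := by
      intro q
      obtain ⟨m, rfl⟩ := QuotientAddGroup.mk_surjective q
      rw [← QuotientAddGroup.mk_nsmul]
      exact (QuotientAddGroup.eq_zero_iff _).2 ⟨m, rfl⟩
    have hgenQ : AddSubgroup.closure
        ((T.image (QuotientAddGroup.mk' fM.range) :
          Finset (M ⧸ fM.range)) : Set (M ⧸ fM.range)) = ⊤ := by
      rw [Finset.coe_image]
      have hmap := AddMonoidHom.map_closure (QuotientAddGroup.mk' fM.range) (T : Set M)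
      rw [hTgen, AddSubgroup.map_top_of_surjective _
        (QuotientAddGroup.mk'_surjective fM.range)] at hmap
      exact hmap.symm
    have h3 := aux_card_le_of_torsion e he htor _ hgenQ
    calc Nat.card {m : M // e • m = 0}
        = Nat.card (M ⧸ fM.range) := h1.trans h2
      _ ≤ e ^ (T.image (QuotientAddGroup.mk' fM.range)).card := h3
      _ ≤ e ^ s := Nat.pow_le_pow_right he
          (le_trans Finset.card_image_le hTcard.le)
  calc Nat.card (H1 (Rep.ofDistribMulAction ℤ G M))
      ≤ Nat.card {m : M // e • m = 0} ^ r := by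
        rw [← step4]; exact (step1.trans_eq step2).trans step3
    _ ≤ (e ^ s) ^ r := Nat.pow_le_pow_left step5 r
    _ = e ^ (r * s) := by rw [← pow_mul, mul_comm]
end

section
/- Fix n ≥ 2 and a prime q. There exists a bound N such that for every prime p > N with p ≠ q, every group homomorphism SL(n, ℤ/p) → SL(n, ℤ/q) is trivial (sends every element to the identity). -/
open Matrix Finset

namespace Stmt8Aux

variable {F : Type*} [Field F] [DecidableEq F] {m : Type*} [Fintype m] [DecidableEq m]

theorem diag_two {i j : m} (hij : i ≠ j) {a : F} (ha : a ≠ 0) :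
    Matrix.diagonal (Function.update (Function.update (1 : m → F) i a) j a⁻¹)
      = transvection i j (a-1) * (transvection j i 1 *
        (transvection i j (a⁻¹-1) * transvection j i (-a))) := by
  have hji := hij.symm
  simp only [transvection, add_mul, mul_add, one_mul, mul_one,
    Matrix.single_mul_single_same, Matrix.single_mul_single_of_ne (h := hij),
    Matrix.single_mul_single_of_ne (h := hji), add_zero, zero_add, mul_zero, zero_mul]
  ext r s
  by_cases hri : r = i <;> by_cases hsi : s = i <;> by_cases hrj : r = j <;>
    by_cases hsj : s = j <;>
    simp only [Matrix.add_apply, Matrix.one_apply, Matrix.diagonal_apply,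
      Function.update_apply, Matrix.single_apply_same, hri, hsi, hrj, hsj,
      Matrix.single_apply_of_ne, if_true, if_false, Ne, not_false_iff,
      hij, hji] <;>
    simp_all [eq_comm] <;> field_simp <;> ring

theorem transvection_pow (i j : m) (hij : i ≠ j) (c : F) (k : ℕ) :
    (transvection i j c) ^ k = transvection i j ((k : F) * c) := by
  induction k with
  | zero => simp
  | succ k ih =>
    rw [pow_succ, ih, transvection_mul_transvection_same (h := hij)]
    push_cast
    ring_nf

/-- Helper constructor. -/
def mkSL (A : Matrix m m F) (h : A.det = 1) : Matrix.SpecialLinearGroup m F := ⟨A, h⟩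

/-- The transvection as an element of `SL`. -/
def tSL (i j : m) (hij : i ≠ j) (c : F) : Matrix.SpecialLinearGroup m F :=
  ⟨transvection i j c, by simp [det_transvection_of_ne i j hij]⟩

variable (K : Subgroup (Matrix.SpecialLinearGroup m F))
variable (hK : ∀ (i j : m) (hij : i ≠ j) (c : F), tSL i j hij c ∈ K)

include hK in
theorem diag2_mem {i j : m} (hij : i ≠ j) {a : F} (ha : a ≠ 0)
    (h1 : (Matrix.diagonal
      (Function.update (Function.update (1 : m → F) i a) j a⁻¹)).det = 1) :
    (⟨_, h1⟩ : Matrix.SpecialLinearGroup m F) ∈ K := by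
  have : (⟨_, h1⟩ : Matrix.SpecialLinearGroup m F)
      = tSL i j hij (a-1) * (tSL j i hij.symm 1 *
        (tSL i j hij (a⁻¹-1) * tSL j i hij.symm (-a))) := by
    apply Subtype.ext
    exact diag_two hij ha
  rw [this]
  exact mul_mem (hK _ _ _ _) (mul_mem (hK _ _ _ _) (mul_mem (hK _ _ _ _) (hK _ _ _ _)))

include hK in
theorem diagonal_mem : ∀ (k : ℕ) (D : m → F) (hD : (Matrix.diagonal D).det = 1),
    (Finset.univ.filter (fun i => D i ≠ 1)).card ≤ k →
    (⟨Matrix.diagonal D, hD⟩ : Matrix.SpecialLinearGroup m F) ∈ K := by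
  intro k
  induction k with
  | zero =>
    intro D hD hcard
    have : ∀ x, D x = 1 := by
      intro x
      by_contra hx
      have : x ∈ Finset.univ.filter (fun i => D i ≠ 1) := by simp [hx]
      have := Finset.card_pos.mpr ⟨x, this⟩
      omega
    have hD1 : D = 1 := funext this
    have heq : (⟨Matrix.diagonal D, hD⟩ : Matrix.SpecialLinearGroup m F)
        = (1 : Matrix.SpecialLinearGroup m F) :=
      Subtype.ext (by show Matrix.diagonal D = _
                      rw [Matrix.SpecialLinearGroup.coe_one, hD1]
                      exact Matrix.diagonal_one)
    exact heq ▸ one_mem K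
  | succ k ih =>
    intro D hD hcard
    set S := Finset.univ.filter (fun i => D i ≠ 1) with hS
    by_cases hc : S.card ≤ k
    · exact ih D hD hc
    have hcard' : S.card = k + 1 := by omega
    -- every D i is nonzero
    have hDne : ∀ x, D x ≠ 0 := by
      have hprod : ∏ x, D x = 1 := by rwa [det_diagonal] at hD
      intro x hx
      rw [Finset.prod_eq_zero (Finset.mem_univ x) hx] at hprod
      exact one_ne_zero hprod.symm
    -- S has at least two elements
    have h2 : 1 < S.card := by
      rcases Nat.lt_or_ge 1 S.card with h | h
      · exact h
      · exfalso
        have h1 : S.card = 1 := by omega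
        obtain ⟨i, hi⟩ := Finset.card_eq_one.mp h1
        have hiS : i ∈ S := hi ▸ Finset.mem_singleton_self i
        have hDi : D i ≠ 1 := by simpa [hS] using hiS
        have hothers : ∀ x, x ≠ i → D x = 1 := by
          intro x hx
          by_contra hx1
          have : x ∈ S := by simp [hS, hx1]
          rw [hi, Finset.mem_singleton] at this
          exact hx this
        have hprod : ∏ x, D x = 1 := by rwa [det_diagonal] at hD
        rw [Finset.prod_eq_single i (fun x _ hx => hothers x hx)
          (fun h => absurd (Finset.mem_univ i) h)] at hprod
        exact hDi hprod
    obtain ⟨i, hiS, j, hjS, hij⟩ := Finset.one_lt_card.mp h2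
    set a := D i with haDef
    have ha : a ≠ 0 := hDne i
    set D' : m → F := Function.update (Function.update D i 1) j (D i * D j)
      with hD'
    have hfac : Function.update (Function.update (1 : m → F) i a) j a⁻¹ * D' = D := by
      funext x
      by_cases hxj : x = j
      · subst hxj
        simp [D', Function.update_apply, hij.symm, Pi.mul_apply, ← mul_assoc,
          inv_mul_cancel₀ ha, haDef, hDne]
      · by_cases hxi : x = i
        · subst hxi
          simp [D', Function.update_apply, hxj, hij, Pi.mul_apply, haDef]
        · simp [D', Function.update_apply, hxj, hxi, Pi.mul_apply]
    have hdet2 : (Matrix.diagonal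
        (Function.update (Function.update (1 : m → F) i a) j a⁻¹)).det = 1 := by
      rw [diag_two hij ha]
      simp [det_transvection_of_ne _ _ hij, det_transvection_of_ne _ _ hij.symm]
    have hsplit : Matrix.diagonal D =
        Matrix.diagonal (Function.update (Function.update (1 : m → F) i a) j a⁻¹) *
          Matrix.diagonal D' := by
      rw [diagonal_mul_diagonal]
      exact (congrArg Matrix.diagonal hfac).symm
    have hdetD' : (Matrix.diagonal D').det = 1 := by
      have := hD
      rw [hsplit, det_mul, hdet2, one_mul] at this
      exact this
    -- cardinality decreases
    have hsub : Finset.univ.filter (fun x => D' x ≠ 1) ⊆ S.erase i := by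
      intro x hx
      have hx' : D' x ≠ 1 := by simpa using hx
      rw [Finset.mem_erase]
      constructor
      · rintro rfl
        apply hx'
        simp [D', Function.update_apply, hij]
      · by_cases hxj : x = j
        · subst hxj; exact hjS
        · by_cases hxi : x = i
          · subst hxi; exact hiS
          · have : D' x = D x := by simp [D', Function.update_apply, hxj, hxi]
            rw [this] at hx'
            simp [hS, hx']
    have hcardD' : (Finset.univ.filter (fun x => D' x ≠ 1)).card ≤ k := by
      have h1 := Finset.card_le_card hsub
      have h2 := Finset.card_erase_of_mem hiS
      omega
    have hmemD' := ih D' hdetD' hcardD'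
    have : (⟨Matrix.diagonal D, hD⟩ : Matrix.SpecialLinearGroup m F)
        = mkSL _ hdet2 * mkSL _ hdetD' := by
      apply Subtype.ext
      exact hsplit
    rw [this]
    exact mul_mem (diag2_mem K hK hij ha hdet2) hmemD'

include hK in
theorem list_prod_mem (L : List (TransvectionStruct m F)) :
    ∀ h1 : ((L.map TransvectionStruct.toMatrix).prod).det = 1,
    (⟨_, h1⟩ : Matrix.SpecialLinearGroup m F) ∈ K := by
  induction L with
  | nil =>
    intro h1
    have heq : (⟨_, h1⟩ : Matrix.SpecialLinearGroup m F)
        = (1 : Matrix.SpecialLinearGroup m F) :=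
      Subtype.ext (by simp [Matrix.SpecialLinearGroup.coe_one])
    exact heq ▸ one_mem K
  | cons t L ihL =>
    intro h1
    have hdetL : ((L.map TransvectionStruct.toMatrix).prod).det = 1 :=
      TransvectionStruct.det_toMatrix_prod L
    have : (⟨_, h1⟩ : Matrix.SpecialLinearGroup m F)
        = tSL t.i t.j t.hij t.c * ⟨_, hdetL⟩ := by
      apply Subtype.ext
      obtain ⟨ti, tj, hij, c⟩ := t
      show (List.map TransvectionStruct.toMatrix _).prod = _
      rw [List.map_cons, List.prod_cons]
      rfl
    rw [this]
    exact mul_mem (hK _ _ _ _) (ihL hdetL)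

include hK in
theorem all_mem (g : Matrix.SpecialLinearGroup m F) : g ∈ K := by
  obtain ⟨L, L', D, hg⟩ :=
    Matrix.Pivot.exists_list_transvec_mul_diagonal_mul_list_transvec (g : Matrix m m F)
  have hdetL : ((L.map TransvectionStruct.toMatrix).prod).det = 1 :=
    TransvectionStruct.det_toMatrix_prod L
  have hdetL' : ((L'.map TransvectionStruct.toMatrix).prod).det = 1 :=
    TransvectionStruct.det_toMatrix_prod L'
  have hdetg : (g : Matrix m m F).det = 1 := g.2
  have hdetD : (Matrix.diagonal D).det = 1 := by
    rw [hg, det_mul, det_mul, hdetL, hdetL'] at hdetg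
    simpa using hdetg
  have : g = mkSL _ hdetL * (mkSL _ hdetD * mkSL _ hdetL') := by
    apply Subtype.ext
    show (g : Matrix m m F) = (List.map TransvectionStruct.toMatrix L).prod *
      (Matrix.diagonal D * (List.map TransvectionStruct.toMatrix L').prod)
    rw [hg, mul_assoc]
  rw [this]
  exact mul_mem (list_prod_mem K hK L hdetL)
    (mul_mem (diagonal_mem K hK _ D hdetD le_rfl) (list_prod_mem K hK L' hdetL'))

end Stmt8Aux

/-- For fixed `n ≥ 2` and a fixed prime `q`, every homomorphism
`SL(n, ℤ/p) → SL(n, ℤ/q)` is trivial for all sufficiently large primes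
`p ≠ q`. -/
theorem stmt8 (n : ℕ) (hn : 2 ≤ n) (q : ℕ) (hq : q.Prime) :
    ∃ N : ℕ, ∀ p : ℕ, p.Prime → N < p → p ≠ q →
      ∀ f : Matrix.SpecialLinearGroup (Fin n) (ZMod p) →*
          Matrix.SpecialLinearGroup (Fin n) (ZMod q),
        f = 1 := by
  haveI := Fact.mk hq
  refine ⟨Fintype.card (Matrix.SpecialLinearGroup (Fin n) (ZMod q)), ?_⟩
  intro p hp hNp hpq f
  haveI := Fact.mk hp
  set K := f.ker with hKdef
  have hK : ∀ (i j : Fin n) (hij : i ≠ j) (c : ZMod p),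
      Stmt8Aux.tSL i j hij c ∈ K := by
    intro i j hij c
    set x := Stmt8Aux.tSL i j hij c with hx
    have hxp : x ^ p = 1 := by
      apply Subtype.ext
      push_cast
      show (Matrix.transvection i j c : Matrix (Fin n) (Fin n) (ZMod p)) ^ p = 1
      rw [Stmt8Aux.transvection_pow i j hij c p, ZMod.natCast_self, zero_mul,
        Matrix.transvection_zero]
    have hfxp : (f x) ^ p = 1 := by rw [← map_pow, hxp]; exact map_one f
    have h1 : orderOf (f x) ∣ p := orderOf_dvd_of_pow_eq_one hfxp
    have h2 : orderOf (f x) ∣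
        Fintype.card (Matrix.SpecialLinearGroup (Fin n) (ZMod q)) :=
      orderOf_dvd_card
    have hcop : Nat.Coprime p
        (Fintype.card (Matrix.SpecialLinearGroup (Fin n) (ZMod q))) := by
      rw [Nat.Prime.coprime_iff_not_dvd hp]
      intro hdvd
      have := Nat.le_of_dvd Fintype.card_pos hdvd
      omega
    have : orderOf (f x) ∣ 1 := by
      have := Nat.dvd_gcd h1 h2
      rwa [Nat.Coprime.gcd_eq_one hcop] at this
    have : orderOf (f x) = 1 := Nat.dvd_one.mp this
    rw [MonoidHom.mem_ker]
    exact orderOf_eq_one_iff.mp this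
  have hall := Stmt8Aux.all_mem K hK
  ext g
  have := hall g
  rw [hKdef, MonoidHom.mem_ker] at this
  simp [this]
end

section
/- Fix n ≥ 2 and a prime q, and let d denote the order of the finite group SL(n, ℤ/q). There exists a bound N such that for every set T of primes with every p ∈ T satisfying p > N and p not dividing d, every group homomorphism from the direct product ∏_{p ∈ T} SL(n, ℤ/p) to SL(n, ℤ/q) is trivial. -/
open Matrix Sum
open scoped Matrix

namespace MyStmt9

variable {𝕜 : Type*} [Field 𝕜]

open Matrix.TransvectionStruct Matrix.Pivot

theorem twoBlock_bdd_ne_zero {r : ℕ} (M : Matrix (Fin r ⊕ Unit) (Fin r ⊕ Unit) 𝕜)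
    (hM : M (inr Unit.unit) (inr Unit.unit) ≠ 0) :
    ∃ L L' : List (TransvectionStruct (Fin r ⊕ Unit) 𝕜),
      L.length = r ∧ L'.length = r ∧
      IsTwoBlockDiagonal ((L.map toMatrix).prod * M * (L'.map toMatrix).prod) := by
  let L : List (TransvectionStruct (Fin r ⊕ Unit) 𝕜) :=
    List.ofFn fun i : Fin r =>
      ⟨inl i, inr Unit.unit, by simp, -M (inl i) (inr Unit.unit) / M (inr Unit.unit) (inr Unit.unit)⟩
  let L' : List (TransvectionStruct (Fin r ⊕ Unit) 𝕜) :=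
    List.ofFn fun i : Fin r =>
      ⟨inr Unit.unit, inl i, by simp, -M (inr Unit.unit) (inl i) / M (inr Unit.unit) (inr Unit.unit)⟩
  refine ⟨L, L', by simp [L], by simp [L'], ?_⟩
  have A : L.map toMatrix = listTransvecCol M := by simp [L, listTransvecCol, Function.comp_def]
  have B : L'.map toMatrix = listTransvecRow M := by simp [L', listTransvecRow, Function.comp_def]
  rw [A, B]
  exact isTwoBlockDiagonal_listTransvecCol_mul_mul_listTransvecRow M hM

theorem twoBlock_bdd {r : ℕ} (M : Matrix (Fin r ⊕ Unit) (Fin r ⊕ Unit) 𝕜) :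
    ∃ L L' : List (TransvectionStruct (Fin r ⊕ Unit) 𝕜),
      L.length ≤ r + 1 ∧ L'.length ≤ r + 1 ∧
      IsTwoBlockDiagonal ((L.map toMatrix).prod * M * (L'.map toMatrix).prod) := by
  by_cases H : IsTwoBlockDiagonal M
  · exact ⟨List.nil, List.nil, by simp, by simp, by simpa using H⟩
  by_cases hM : M (inr Unit.unit) (inr Unit.unit) ≠ 0
  · obtain ⟨L, L', h1, h2, h3⟩ := twoBlock_bdd_ne_zero M hM
    exact ⟨L, L', by omega, by omega, h3⟩
  push_neg at hM
  simp only [not_and_or, IsTwoBlockDiagonal, toBlocks₁₂, toBlocks₂₁, ← Matrix.ext_iff] at H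
  have : ∃ i : Fin r, M (inl i) (inr Unit.unit) ≠ 0 ∨ M (inr Unit.unit) (inl i) ≠ 0 := by
    cases' H with H H
    · contrapose! H
      rintro i ⟨⟩
      exact (H i).1
    · contrapose! H
      rintro ⟨⟩ j
      exact (H j).2
  rcases this with ⟨i, h | h⟩
  · let M' := transvection (inr Unit.unit) (inl i) 1 * M
    have hM' : M' (inr Unit.unit) (inr Unit.unit) ≠ 0 := by simpa [M', hM]
    rcases twoBlock_bdd_ne_zero M' hM' with ⟨L, L', hl, hl', hLL'⟩
    rw [Matrix.mul_assoc] at hLL'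
    refine ⟨L ++ [⟨inr Unit.unit, inl i, by simp, 1⟩], L', by simpa using Nat.add_le_add_right hl.le 1,
      by omega, ?_⟩
    simp only [List.map_append, List.prod_append, Matrix.mul_one, toMatrix_mk, List.prod_cons,
      List.prod_nil, List.map, Matrix.mul_assoc (L.map toMatrix).prod]
    exact hLL'
  · let M' := M * transvection (inl i) (inr Unit.unit) 1
    have hM' : M' (inr Unit.unit) (inr Unit.unit) ≠ 0 := by simpa [M', hM]
    rcases twoBlock_bdd_ne_zero M' hM' with ⟨L, L', hl, hl', hLL'⟩
    refine ⟨L, ⟨inl i, inr Unit.unit, by simp, 1⟩::L', by omega, by simp [hl'], ?_⟩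
    simp only [← Matrix.mul_assoc, toMatrix_mk, List.prod_cons, List.map]
    rw [Matrix.mul_assoc (L.map toMatrix).prod]
    exact hLL'

end MyStmt9

namespace MyStmt9

open Matrix.TransvectionStruct Matrix.Pivot

variable {𝕜 : Type*} [Field 𝕜]

theorem diag_bdd_induction {r : ℕ} (b : ℕ)
    (IH : ∀ M : Matrix (Fin r) (Fin r) 𝕜,
        ∃ (L₀ L₀' : List (TransvectionStruct (Fin r) 𝕜)) (D₀ : Fin r → 𝕜),
          L₀.length ≤ b ∧ L₀'.length ≤ b ∧
          (L₀.map toMatrix).prod * M * (L₀'.map toMatrix).prod = diagonal D₀)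
    (M : Matrix (Fin r ⊕ Unit) (Fin r ⊕ Unit) 𝕜) :
    ∃ (L L' : List (TransvectionStruct (Fin r ⊕ Unit) 𝕜)) (D : Fin r ⊕ Unit → 𝕜),
      L.length ≤ b + r + 1 ∧ L'.length ≤ b + r + 1 ∧
      (L.map toMatrix).prod * M * (L'.map toMatrix).prod = diagonal D := by
  rcases twoBlock_bdd M with ⟨L₁, L₁', hlen1, hlen1', hM⟩
  let M' := (L₁.map toMatrix).prod * M * (L₁'.map toMatrix).prod
  let M'' := toBlocks₁₁ M'
  rcases IH M'' with ⟨L₀, L₀', D₀, hlen0, hlen0', h₀⟩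
  set c := M' (inr Unit.unit) (inr Unit.unit)
  refine
    ⟨L₀.map (sumInl Unit) ++ L₁, L₁' ++ L₀'.map (sumInl Unit),
      Sum.elim D₀ fun _ => M' (inr Unit.unit) (inr Unit.unit), ?_, ?_, ?_⟩
  · simp only [List.length_append, List.length_map]; omega
  · simp only [List.length_append, List.length_map]; omega
  suffices (L₀.map (toMatrix ∘ sumInl Unit)).prod * M' * (L₀'.map (toMatrix ∘ sumInl Unit)).prod =
      diagonal (Sum.elim D₀ fun _ => c) by
    simpa [M', c, Matrix.mul_assoc]
  have : M' = fromBlocks M'' 0 0 (diagonal fun _ => c) := by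
    rw [← fromBlocks_toBlocks M', hM.1, hM.2]
    rfl
  rw [this]
  simp [h₀]

theorem diag_bdd_aux (nn : Type) [Fintype nn] [DecidableEq nn] (M : Matrix nn nn 𝕜) :
    ∃ (L L' : List (TransvectionStruct nn 𝕜)) (D : nn → 𝕜),
      L.length ≤ (Fintype.card nn)^2 ∧ L'.length ≤ (Fintype.card nn)^2 ∧
      (L.map toMatrix).prod * M * (L'.map toMatrix).prod = diagonal D := by
  induction' hn : Fintype.card nn with r IH generalizing nn M
  · refine ⟨List.nil, List.nil, fun _ => 1, by simp, by simp, ?_⟩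
    ext i j
    rw [Fintype.card_eq_zero_iff] at hn
    exact hn.elim' i
  · have e : nn ≃ Fin r ⊕ Unit := by
      refine Fintype.equivOfCardEq ?_
      rw [hn, @Fintype.card_sum (Fin r) Unit _ _]
      simp
    have key :
        ∃ (L L' : List (TransvectionStruct (Fin r ⊕ Unit) 𝕜)) (D : Fin r ⊕ Unit → 𝕜),
          L.length ≤ r^2 + r + 1 ∧ L'.length ≤ r^2 + r + 1 ∧
          (L.map toMatrix).prod * Matrix.reindexAlgEquiv 𝕜 _ e M * (L'.map toMatrix).prod =
            diagonal D := by
      apply diag_bdd_induction (r^2)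
      intro N
      have := IH (Fin r) N (by simp)
      simpa using this
    rcases key with ⟨L₀, L₀', D₀, hl, hl', h₀⟩
    refine ⟨L₀.map (reindexEquiv e.symm), L₀'.map (reindexEquiv e.symm), D₀ ∘ e, ?_, ?_, ?_⟩
    · simp only [List.length_map]; nlinarith
    · simp only [List.length_map]; nlinarith
    have : M = reindexAlgEquiv 𝕜 _ e.symm (reindexAlgEquiv 𝕜 _ e M) := by
      simp only [Equiv.symm_symm, submatrix_submatrix, reindex_apply, submatrix_id_id,
        Equiv.symm_comp_self, reindexAlgEquiv_apply]
    rw [this]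
    simp only [toMatrix_reindexEquiv_prod, List.map_map, reindexAlgEquiv_apply]
    simp only [← reindexAlgEquiv_apply 𝕜, ← reindexAlgEquiv_mul, h₀]
    simp only [Equiv.symm_symm, reindex_apply, submatrix_diagonal_equiv, reindexAlgEquiv_apply]


section WhiteheadSec
variable {𝕜 : Type*} [Field 𝕜] {nn : Type*} [Fintype nn] [DecidableEq nn]

theorem whitehead (p s : nn) (hps : p ≠ s) (u w : 𝕜) (hu : u * w = 1) :
    transvection p s (-u) * (transvection s p (w - 1) * (transvection p s 1 * transvection s p (u - 1))) =
      diagonal (fun k => if k = p then u else if k = s then w else 1) := by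
  have hd : diagonal (fun k => if k = p then u else if k = s then w else 1)
      = 1 + (Matrix.single p p (u - 1) + Matrix.single s s (w - 1)) := by
    ext i j
    by_cases hip : i = p <;> by_cases his : i = s <;> by_cases hjp : j = p <;>
      by_cases hjs : j = s <;> simp_all [diagonal, one_apply, hps, Ne.symm hps, eq_comm] <;>
      first
        | ring1
        | (intro h; exact absurd h (by simp_all))
  rw [hd]
  simp only [transvection, mul_add, add_mul, one_mul, mul_one]
  simp only [single_mul_single_same, mul_zero, zero_mul, add_zero, zero_add]
  simp [hps, hps.symm]
  ext i j
  by_cases hip : i = p <;> by_cases his : i = s <;> by_cases hjp : j = p <;>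
    by_cases hjs : j = s <;> simp_all [hps, Ne.symm hps, eq_comm] <;>
    first
      | ring1
      | linear_combination hu
      | linear_combination -hu
      | linear_combination (-u) * hu
      | linear_combination u * hu
      | linear_combination (u-1) * hu
      | linear_combination (1-u) * hu

open Matrix.TransvectionStruct in
theorem diag_bdd_whitehead (m : ℕ) : ∀ (s : Finset nn) (v : nn → 𝕜), s.card = m →
    (∀ i ∉ s, v i = 1) → (∀ i, v i ≠ 0) → ∏ i ∈ s, v i = 1 →
    ∃ L : List (TransvectionStruct nn 𝕜), L.length ≤ 4 * m ∧
      (L.map toMatrix).prod = diagonal v := by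
  induction m with
  | zero =>
    intro s v hc h1 _ _
    have hs : s = ∅ := Finset.card_eq_zero.mp hc
    have hv : v = fun _ => 1 := funext fun i => h1 i (by simp [hs])
    exact ⟨[], by simp, by simp [hv, Matrix.diagonal_one]⟩
  | succ m IH =>
    intro s v hc h1 h0 hp
    obtain ⟨a, ha⟩ : ∃ a, a ∈ s := (Finset.card_pos.mp (by omega)).exists_mem
    rcases Nat.eq_zero_or_pos m with rfl | hm
    · obtain ⟨x, hx⟩ := Finset.card_eq_one.mp hc
      have hax : a = x := by simpa [hx] using ha
      subst hax
      have hva : v a = 1 := by simpa [hx] using hp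
      have hv : v = fun _ => 1 := by
        funext i
        by_cases h : i = a
        · rw [h, hva]
        · exact h1 i (by simp [hx, h])
      exact ⟨[], by simp, by simp [hv, Matrix.diagonal_one]⟩
    · obtain ⟨b, hb⟩ : ∃ b, b ∈ s.erase a :=
        (Finset.card_pos.mp (by rw [Finset.card_erase_of_mem ha]; omega)).exists_mem
      have hba : b ≠ a := Finset.ne_of_mem_erase hb
      have hab : a ≠ b := hba.symm
      have hbs : b ∈ s := Finset.mem_of_mem_erase hb
      set u := v a with hu_def
      set v'' : nn → 𝕜 := Function.update (Function.update v a 1) b (v a * v b) with hv''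
      have hv''a : v'' a = 1 := by
        rw [hv'', Function.update_of_ne hab, Function.update_self]
      have hv''b : v'' b = v a * v b := by rw [hv'', Function.update_self]
      have hv''other : ∀ i, i ≠ a → i ≠ b → v'' i = v i := fun i hia hib => by
        rw [hv'', Function.update_of_ne hib, Function.update_of_ne hia]
      have hprod : ∏ i ∈ s.erase a, v'' i = 1 := by
        rw [← Finset.mul_prod_erase _ _ hb, hv''b]
        have e1 : ∏ i ∈ (s.erase a).erase b, v'' i = ∏ i ∈ (s.erase a).erase b, v i :=
          Finset.prod_congr rfl fun i hi => hv''other i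
            (Finset.ne_of_mem_erase (Finset.mem_of_mem_erase hi))
            (Finset.ne_of_mem_erase hi)
        rw [e1, mul_assoc]
        rw [← Finset.mul_prod_erase _ _ ha, ← Finset.mul_prod_erase _ _ hb] at hp
        exact hp
      obtain ⟨L', hl', hL'⟩ := IH (s.erase a) v''
        (by rw [Finset.card_erase_of_mem ha, hc]; rfl)
        (by
          intro i hi
          by_cases hia : i = a
          · rw [hia]; exact hv''a
          · have his : i ∉ s := fun hins => hi (Finset.mem_erase.mpr ⟨hia, hins⟩)
            have hib : i ≠ b := fun h => his (h ▸ hbs)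
            rw [hv''other i hia hib]
            exact h1 i his)
        (by
          intro i
          by_cases hib : i = b
          · rw [hib, hv''b]; exact mul_ne_zero (h0 a) (h0 b)
          · by_cases hia : i = a
            · rw [hia, hv''a]; exact one_ne_zero
            · rw [hv''other i hia hib]; exact h0 i)
        hprod
      have hu : u * u⁻¹ = 1 := mul_inv_cancel₀ (h0 a)
      refine ⟨⟨a, b, hab, -u⟩ :: ⟨b, a, hba, u⁻¹ - 1⟩ :: ⟨a, b, hab, 1⟩ :: ⟨b, a, hba, u - 1⟩ :: L',
        by simp only [List.length_cons]; omega, ?_⟩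
      simp only [List.map_cons, List.prod_cons, toMatrix_mk, hL']
      have hassoc :
          transvection a b (-u) * (transvection b a (u⁻¹ - 1) * (transvection a b 1 *
            (transvection b a (u - 1) * diagonal v''))) =
          (transvection a b (-u) * (transvection b a (u⁻¹ - 1) * (transvection a b 1 *
            transvection b a (u - 1)))) * diagonal v'' := by
        simp only [mul_assoc]
      have hfun : (fun k => (if k = a then u else if k = b then u⁻¹ else 1) * v'' k) = v := by
        funext i
        by_cases hia : i = a
        · subst hia
          simp [hv''a, hu_def]
        · by_cases hib : i = b
          · subst hib
            rw [if_neg hia, if_pos rfl, hv''b, hu_def, inv_mul_cancel_left₀ (h0 a)]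
          · rw [if_neg hia, if_neg hib, hv''other i hia hib, one_mul]
      rw [hassoc, whitehead a b hab u u⁻¹ hu, diagonal_mul_diagonal, hfun]

open Matrix.TransvectionStruct in
theorem SL_bdd {n' : ℕ} (M : Matrix (Fin n') (Fin n') 𝕜) (hM : M.det = 1) :
    ∃ L : List (TransvectionStruct (Fin n') 𝕜),
      L.length ≤ 2 * n' ^ 2 + 4 * n' ∧ (L.map toMatrix).prod = M := by
  obtain ⟨L, L', D, hl, hl', h⟩ := diag_bdd_aux (Fin n') M
  rw [Fintype.card_fin] at hl hl'
  have hdet : ∏ i, D i = 1 := by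
    have hc := congrArg Matrix.det h
    rw [Matrix.det_mul, Matrix.det_mul, det_toMatrix_prod, det_toMatrix_prod, hM,
      Matrix.det_diagonal] at hc
    simpa using hc.symm
  have h0 : ∀ i, D i ≠ 0 := by
    intro i hi
    have : ∏ i, D i = 0 := Finset.prod_eq_zero (Finset.mem_univ i) hi
    rw [hdet] at this
    exact one_ne_zero this
  obtain ⟨L₀, hl₀, hL₀⟩ := diag_bdd_whitehead (Fintype.card (Fin n')) Finset.univ D rfl
    (fun i hi => absurd (Finset.mem_univ i) hi) h0 hdet
  rw [Fintype.card_fin] at hl₀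
  have hMeq : M = (L.reverse.map (toMatrix ∘ TransvectionStruct.inv)).prod * diagonal D *
      (L'.reverse.map (toMatrix ∘ TransvectionStruct.inv)).prod := by
    suffices M = (L.reverse.map (toMatrix ∘ TransvectionStruct.inv)).prod * (L.map toMatrix).prod
        * M * ((L'.map toMatrix).prod * (L'.reverse.map (toMatrix ∘ TransvectionStruct.inv)).prod) by
      simpa [← h, Matrix.mul_assoc]
    rw [reverse_inv_prod_mul_prod, prod_mul_reverse_inv_prod, Matrix.one_mul, Matrix.mul_one]
  refine ⟨L.reverse.map TransvectionStruct.inv ++ (L₀ ++ L'.reverse.map TransvectionStruct.inv),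
    ?_, ?_⟩
  · simp only [List.length_append, List.length_map, List.length_reverse]
    nlinarith
  · rw [List.map_append, List.map_append, List.prod_append, List.prod_append, hL₀,
      List.map_map, List.map_map, ← Matrix.mul_assoc]
    exact hMeq.symm

theorem transvection_pow {R : Type*} [CommRing R] {i j : nn} (hij : i ≠ j) (c : R) (m : ℕ) :
    Matrix.transvection i j c ^ m = Matrix.transvection i j ((m : R) * c) := by
  induction m with
  | zero => simp
  | succ m IH =>
    rw [pow_succ, IH, Matrix.transvection_mul_transvection_same _ _ hij]
    congr 1
    push_cast
    ring

end WhiteheadSec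

end MyStmt9

open MyStmt9 Matrix.TransvectionStruct in
/-- Let `n ≥ 2`, `q` a prime, and `d` the order of `SL(n, ℤ/q)`.  There is a
bound `N` such that for every set `T` of primes, each greater than `N` and not
dividing `d`, every homomorphism from `∏_{p ∈ T} SL(n, ℤ/p)` to `SL(n, ℤ/q)`
is trivial. -/
theorem stmt9 (n : ℕ) (hn : 2 ≤ n) (q : ℕ) (hq : q.Prime)
    (d : ℕ) (hd : d = Nat.card (Matrix.SpecialLinearGroup (Fin n) (ZMod q))) :
    ∃ N : ℕ, ∀ T : Set ℕ, (∀ p ∈ T, p.Prime ∧ N < p ∧ ¬ p ∣ d) →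
      ∀ f : (∀ p : T, Matrix.SpecialLinearGroup (Fin n) (ZMod p)) →*
          Matrix.SpecialLinearGroup (Fin n) (ZMod q),
        f = 1 := by
  classical
  refine ⟨0, ?_⟩
  intro T hT f
  have hexp : ∀ x : Matrix.SpecialLinearGroup (Fin n) (ZMod q), x ^ d = 1 := by
    intro x
    rw [hd]
    exact pow_card_eq_one'
  refine MonoidHom.ext fun g => ?_
  show f g = 1
  set K := 2 * n ^ 2 + 4 * n with hK
  have h01 : (⟨0, by omega⟩ : Fin n) ≠ ⟨1, by omega⟩ := by simp [Fin.ext_iff]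
  have hdecomp : ∀ p : T, ∃ t : Fin K → Matrix.TransvectionStruct (Fin n) (ZMod p),
      (g p : Matrix (Fin n) (Fin n) (ZMod p)) =
        (List.ofFn fun j => toMatrix (t j)).prod := by
    intro p
    haveI : Fact (Nat.Prime p) := ⟨(hT p p.2).1⟩
    obtain ⟨L, hL, hprod⟩ := SL_bdd (𝕜 := ZMod p) ((g p : Matrix (Fin n) (Fin n) (ZMod p))) (g p).2
    set l : List (Matrix.TransvectionStruct (Fin n) (ZMod p)) :=
      L ++ List.replicate (K - L.length) ⟨⟨0, by omega⟩, ⟨1, by omega⟩, h01, 0⟩ with hl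
    have hlen : l.length = K := by
      simp only [hl, List.length_append, List.length_replicate]
      omega
    refine ⟨fun j => l.get (Fin.cast hlen.symm j), ?_⟩
    have heq : (List.ofFn fun j : Fin K => toMatrix (l.get (Fin.cast hlen.symm j)))
        = l.map toMatrix := by
      apply List.ext_getElem
      · simp [hlen]
      · intro i h1 h2
        simp [List.getElem_ofFn]
    rw [heq, hl, List.map_append, List.prod_append, hprod, List.map_replicate,
      toMatrix_mk, Matrix.transvection_zero, List.prod_replicate, one_pow, mul_one]
  choose t ht using hdecomp
  let x : Fin K → (∀ p : T, Matrix.SpecialLinearGroup (Fin n) (ZMod p)) :=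
    fun j p => ⟨toMatrix (t p j), Matrix.TransvectionStruct.det _⟩
  let cMH : ∀ p : T, Matrix.SpecialLinearGroup (Fin n) (ZMod p) →*
      Matrix (Fin n) (Fin n) (ZMod p) :=
    fun p => { toFun := fun A => ↑A, map_one' := rfl, map_mul' := fun _ _ => rfl }
  have hg : g = (List.ofFn x).prod := by
    funext p
    have h1 := (Pi.evalMonoidHom
      (fun p : T => Matrix.SpecialLinearGroup (Fin n) (ZMod p)) p).map_list_prod (List.ofFn x)
    rw [List.map_ofFn] at h1
    have h1' : (List.ofFn x).prod p = (List.ofFn fun j => x j p).prod := h1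
    rw [h1']
    apply Subtype.ext
    have h2 := (cMH p).map_list_prod (List.ofFn fun j => x j p)
    rw [List.map_ofFn] at h2
    have h2' : ((List.ofFn fun j => x j p).prod : Matrix (Fin n) (Fin n) (ZMod p))
        = (List.ofFn fun j => toMatrix (t p j)).prod := h2
    rw [h2']
    exact ht p
  have hxj : ∀ j, f (x j) = 1 := by
    intro j
    have hroot : ∃ y, y ^ d = x j := by
      have hy : ∀ p : T, ∃ yp : Matrix.SpecialLinearGroup (Fin n) (ZMod p), yp ^ d = x j p := by
        intro p
        haveI hf : Fact (Nat.Prime (p : ℕ)) := ⟨(hT p p.2).1⟩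
        haveI : NeZero (p : ℕ) := ⟨(hT p p.2).1.ne_zero⟩
        have hsp : x j p ^ (p : ℕ) = 1 := by
          apply Subtype.ext
          rw [Matrix.SpecialLinearGroup.coe_pow]
          show (toMatrix (t p j)) ^ (p : ℕ) = (1 : Matrix (Fin n) (Fin n) (ZMod p))
          rcases t p j with ⟨ti, tj, hij, c⟩
          rw [toMatrix_mk, transvection_pow hij, ZMod.natCast_self, zero_mul,
            Matrix.transvection_zero]
        have hdc : ((d : ZMod p)) ≠ 0 := by
          rw [Ne, ZMod.natCast_eq_zero_iff]
          exact (hT p p.2).2.2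
        set a : ℕ := ((d : ZMod p)⁻¹).val with ha
        have hmod : (d * a) % (p : ℕ) = 1 % (p : ℕ) := by
          have : ((d * a : ℕ) : ZMod p) = ((1 : ℕ) : ZMod p) := by
            push_cast
            rw [ha, ZMod.natCast_val, ZMod.cast_id]
            exact mul_inv_cancel₀ hdc
          rwa [ZMod.natCast_eq_natCast_iff', ] at this
        have hone : 1 % (p : ℕ) = 1 := Nat.mod_eq_of_lt (hT p p.2).1.one_lt
        refine ⟨x j p ^ a, ?_⟩
        rw [← pow_mul, mul_comm a d]
        have hda : d * a = (p : ℕ) * (d * a / (p : ℕ)) + 1 := by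
          conv_lhs => rw [← Nat.div_add_mod (d * a) (p : ℕ)]
          rw [hmod, hone]
        rw [hda, pow_add, pow_mul, hsp, one_pow, one_mul, pow_one]
      choose y hy using hy
      exact ⟨y, funext fun p => hy p⟩
    obtain ⟨y, hy⟩ := hroot
    rw [← hy, map_pow, hexp]
  rw [hg, f.map_list_prod, List.map_ofFn]
  apply List.prod_eq_one
  intro m hm
  rw [List.mem_ofFn] at hm
  obtain ⟨j, rfl⟩ := hm
  exact hxj j
end

section
/- Let n ≥ 2, let (F_i)_{i ∈ I} be an arbitrary family of fields, and let A = ∏_{i ∈ I} F_i be the product ring. Then the group SL(n, A) of n×n matrices over A with determinant 1 is generated by its elementary transvections, i.e., by the matrices 1 + c·E_{jk} with j ≠ k and c ∈ A, where E_{jk} is the matrix with a single 1 in position (j,k) and 0 elsewhere. -/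
open Matrix

namespace Stmt10

section EntryLemmas

variable {n : ℕ} {R : Type*} [CommRing R]

lemma transvection_mul_entry (i j : Fin n) (c : R)
    (X : Matrix (Fin n) (Fin n) R) (a b : Fin n) :
    (Matrix.transvection i j c * X) a b = X a b + if a = i then c * X j b else 0 := by
  by_cases hai : a = i
  · subst hai; rw [Matrix.transvection_mul_apply_same]; simp
  · rw [Matrix.transvection_mul_apply_of_ne _ _ _ _ hai]; simp [hai]

lemma rowmat_mul_entry (k : Fin n) (v : Fin n → R) (X : Matrix (Fin n) (Fin n) R) (a b : Fin n) :
    ((1 + Matrix.of (fun a b => if a = k then v b else 0)) * X) a b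
      = X a b + if a = k then ∑ x, v x * X x b else 0 := by
  rw [Matrix.add_mul, Matrix.one_mul, Matrix.add_apply]
  congr 1
  rw [Matrix.mul_apply]
  by_cases hak : a = k
  · subst hak; simp
  · simp [hak]

lemma colmat_mul_entry (k : Fin n) (w : Fin n → R) (X : Matrix (Fin n) (Fin n) R) (a b : Fin n) :
    ((1 + Matrix.of (fun a b => if b = k then w a else 0)) * X) a b
      = X a b + w a * X k b := by
  rw [Matrix.add_mul, Matrix.one_mul, Matrix.add_apply]
  congr 1
  rw [Matrix.mul_apply]
  simp [ite_mul, Finset.sum_ite_eq' Finset.univ k]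

lemma mul_rowmat_entry (k : Fin n) (v : Fin n → R) (X : Matrix (Fin n) (Fin n) R) (a b : Fin n) :
    (X * (1 + Matrix.of (fun a b => if a = k then v b else 0))) a b
      = X a b + X a k * v b := by
  rw [Matrix.mul_add, Matrix.mul_one, Matrix.add_apply]
  congr 1
  rw [Matrix.mul_apply]
  simp [mul_ite, Finset.sum_ite_eq' Finset.univ k]

end EntryLemmas

variable {n : ℕ} {I : Type*} {F : I → Type*} [∀ i, Field (F i)]

abbrev SL (n : ℕ) (F : I → Type*) [∀ i, Field (F i)] : Type _ :=
  Matrix.SpecialLinearGroup (Fin n) (∀ i, F i)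

section

variable (H : Subgroup (SL n F))

def elt (j k : Fin n) (h : j ≠ k) (c : ∀ i, F i) : SL n F :=
  ⟨Matrix.transvection j k c, Matrix.det_transvection_of_ne j k h c⟩

@[simp] lemma elt_coe (j k : Fin n) (h : j ≠ k) (c : ∀ i, F i) :
    ((elt j k h c : SL n F) : Matrix (Fin n) (Fin n) (∀ i, F i)) = Matrix.transvection j k c := rfl

lemma row_update (k x : Fin n) (hxk : x ≠ k) (v' : Fin n → (∀ i, F i))
    (hv'x : v' x = 0) (hv'k : v' k = 0) (c : ∀ i, F i) :
    (1 + Matrix.of (fun a b => if a = k then v' b else 0)) * Matrix.transvection k x c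
      = 1 + Matrix.of (fun a b => if a = k then (Function.update v' x c) b else 0) := by
  refine Matrix.ext fun a b => ?_
  by_cases hbx : b = x
  · subst hbx
    rw [Matrix.mul_transvection_apply_same]
    by_cases hak : a = k
    · subst hak
      simp [Matrix.add_apply, Matrix.one_apply, hxk, Ne.symm hxk, hv'x, hv'k]
    · simp [Matrix.add_apply, Matrix.one_apply, hak]
  · rw [Matrix.mul_transvection_apply_of_ne _ _ _ _ hbx]
    simp [Matrix.add_apply, Function.update_of_ne hbx]

lemma col_update (k x : Fin n) (hxk : x ≠ k) (w' : Fin n → (∀ i, F i))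
    (hw'x : w' x = 0) (hw'k : w' k = 0) (c : ∀ i, F i) :
    Matrix.transvection x k c * (1 + Matrix.of (fun a b => if b = k then w' a else 0))
      = 1 + Matrix.of (fun a b => if b = k then (Function.update w' x c) a else 0) := by
  refine Matrix.ext fun a b => ?_
  by_cases hax : a = x
  · subst hax
    rw [Matrix.transvection_mul_apply_same]
    by_cases hbk : b = k
    · subst hbk
      simp [Matrix.add_apply, Matrix.one_apply, hxk, Ne.symm hxk, hw'x, hw'k]
    · simp [Matrix.add_apply, Matrix.one_apply, hbk, Ne.symm hxk, hw'k,
        (show ¬ (k = b) from fun h => hbk h.symm)]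
  · rw [Matrix.transvection_mul_apply_of_ne _ _ _ _ hax]
    simp [Matrix.add_apply, Function.update_of_ne hax]

variable (hS : ∀ (j k : Fin n) (h : j ≠ k) (c : ∀ i, F i), elt j k h c ∈ H)

include hS

lemma row_mem (k : Fin n) (v : Fin n → (∀ i, F i)) (hv : v k = 0) :
    ∃ p : SL n F, p ∈ H ∧ (p : Matrix (Fin n) (Fin n) (∀ i, F i))
      = 1 + Matrix.of (fun a b => if a = k then v b else 0) := by
  classical
  suffices h : ∀ (s : Finset (Fin n)) (v : Fin n → (∀ i, F i)), v k = 0 →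
      (∀ x ∉ s, v x = 0) →
      ∃ p : SL n F, p ∈ H ∧ (p : Matrix (Fin n) (Fin n) (∀ i, F i))
        = 1 + Matrix.of (fun a b => if a = k then v b else 0) by
    exact h Finset.univ v hv (fun x hx => absurd (Finset.mem_univ x) hx)
  intro s
  induction s using Finset.induction with
  | empty =>
      intro v hvk hv0
      refine ⟨1, one_mem H, ?_⟩
      refine Matrix.ext fun a b => ?_
      simp [hv0 b (Finset.notMem_empty b), Matrix.one_apply, Matrix.add_apply]
  | @insert x s hx ih =>
      intro v hvk hv0
      by_cases hxk : x = k
      · exact ih v hvk (fun y hy => by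
          by_cases hyx : y = x
          · rw [hyx, hxk]; exact hvk
          · exact hv0 y (by simp [hyx, hy]))
      · obtain ⟨p', hp'H, hp'⟩ := ih (Function.update v x 0)
          (by rw [Function.update_of_ne (Ne.symm hxk)]; exact hvk)
          (fun y hy => by
            by_cases hyx : y = x
            · rw [hyx]; simp
            · rw [Function.update_of_ne hyx]; exact hv0 y (by simp [hyx, hy]))
        refine ⟨p' * elt k x (Ne.symm hxk) (v x), mul_mem hp'H (hS _ _ _ _), ?_⟩
        rw [Matrix.SpecialLinearGroup.coe_mul, hp', elt_coe,
          row_update k x hxk _ (Function.update_self x 0 v)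
            (by rw [Function.update_of_ne (Ne.symm hxk)]; exact hvk) (v x)]
        congr 1
        refine congrArg Matrix.of (funext fun a => funext fun b => ?_)
        congr 1
        rw [Function.update_idem]
        by_cases hbx : b = x
        · rw [hbx, Function.update_self]
        · rw [Function.update_of_ne hbx]

lemma col_mem (k : Fin n) (w : Fin n → (∀ i, F i)) (hw : w k = 0) :
    ∃ p : SL n F, p ∈ H ∧ (p : Matrix (Fin n) (Fin n) (∀ i, F i))
      = 1 + Matrix.of (fun a b => if b = k then w a else 0) := by
  classical
  suffices h : ∀ (s : Finset (Fin n)) (w : Fin n → (∀ i, F i)), w k = 0 →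
      (∀ x ∉ s, w x = 0) →
      ∃ p : SL n F, p ∈ H ∧ (p : Matrix (Fin n) (Fin n) (∀ i, F i))
        = 1 + Matrix.of (fun a b => if b = k then w a else 0) by
    exact h Finset.univ w hw (fun x hx => absurd (Finset.mem_univ x) hx)
  intro s
  induction s using Finset.induction with
  | empty =>
      intro w hwk hw0
      refine ⟨1, one_mem H, ?_⟩
      refine Matrix.ext fun a b => ?_
      simp [hw0 a (Finset.notMem_empty a), Matrix.one_apply, Matrix.add_apply]
  | @insert x s hx ih =>
      intro w hwk hw0
      by_cases hxk : x = k
      · exact ih w hwk (fun y hy => by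
          by_cases hyx : y = x
          · rw [hyx, hxk]; exact hwk
          · exact hw0 y (by simp [hyx, hy]))
      · obtain ⟨p', hp'H, hp'⟩ := ih (Function.update w x 0)
          (by rw [Function.update_of_ne (Ne.symm hxk)]; exact hwk)
          (fun y hy => by
            by_cases hyx : y = x
            · rw [hyx]; simp
            · rw [Function.update_of_ne hyx]; exact hw0 y (by simp [hyx, hy]))
        refine ⟨elt x k hxk (w x) * p', mul_mem (hS _ _ _ _) hp'H, ?_⟩
        rw [Matrix.SpecialLinearGroup.coe_mul, hp', elt_coe,
          col_update k x hxk _ (Function.update_self x 0 w)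
            (by rw [Function.update_of_ne (Ne.symm hxk)]; exact hwk) (w x)]
        congr 1
        refine congrArg Matrix.of (funext fun a => funext fun b => ?_)
        congr 1
        rw [Function.update_idem]
        by_cases hax : a = x
        · rw [hax, Function.update_self]
        · rw [Function.update_of_ne hax]

lemma main (hn : 2 ≤ n) (M : SL n F) : M ∈ H := by
  classical
  suffices key : ∀ (d k : ℕ), k + d + 1 = n → ∀ M : SL n F,
      (∀ a b : Fin n, (a.val < k ∨ b.val < k) →
        (M : Matrix (Fin n) (Fin n) (∀ i, F i)) a b = if a = b then 1 else 0) → M ∈ H by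
    refine key (n - 1) 0 (by omega) M (fun a b h => ?_)
    rcases h with h | h <;> exact absurd h (Nat.not_lt_zero _)
  intro d
  induction d with
  | zero =>
      intro k hk M hM
      have hkn : k < n := by omega
      set N : Matrix (Fin n) (Fin n) (∀ i, F i) := (M : Matrix (Fin n) (Fin n) (∀ i, F i))
        with hNdef
      set t : Fin n := ⟨k, hkn⟩ with ht
      have claim : N = Matrix.diagonal (fun x => if x = t then N t t else 1) := by
        refine Matrix.ext fun a b => ?_
        by_cases hab : a = b
        · subst hab
          rw [Matrix.diagonal_apply_eq]
          by_cases hat : a = t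
          · rw [hat, if_pos rfl]
          · have hav : a.val < k := by
              have h1 := a.isLt
              have h2 : a.val ≠ k := fun h => hat (Fin.ext (show a.val = (t : Fin n).val from h))
              omega
            rw [hM a a (Or.inl hav), if_pos rfl, if_neg hat]
        · rw [Matrix.diagonal_apply_ne _ hab]
          by_cases hat : a = t
          · have hbt : b.val < k := by
              have hb := b.isLt
              have h2 : b.val ≠ k := by
                intro hbe
                apply hab
                rw [hat]
                exact (Fin.ext (show b.val = (t : Fin n).val from hbe)).symm
              omega
            rw [hM a b (Or.inr hbt), if_neg hab]
          · have hav : a.val < k := by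
              have h1 := a.isLt
              have h2 : a.val ≠ k := fun h => hat (Fin.ext (show a.val = (t : Fin n).val from h))
              omega
            rw [hM a b (Or.inl hav), if_neg hab]
      have hdet : N.det = 1 := hNdef ▸ M.2
      rw [claim, Matrix.det_diagonal] at hdet
      have hNtt : N t t = 1 := by
        rw [Finset.prod_ite_eq' Finset.univ t (fun _ => N t t)] at hdet
        simpa using hdet
      have hN1 : N = 1 := by
        rw [claim, hNtt]
        simp
      have hMone : M = 1 := Subtype.ext (by rw [← hNdef, hN1]; rfl)
      rw [hMone]; exact one_mem H
  | succ d ih =>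
      intro k hk M hM
      have hkn : k + 1 < n := by omega
      have hkn' : k < n := by omega
      set kF : Fin n := ⟨k, hkn'⟩ with hkFdef
      set k1 : Fin n := ⟨k + 1, hkn⟩ with hk1def
      have hkk1 : kF ≠ k1 := by
        intro h
        have : k = k + 1 := congrArg Fin.val h
        omega
      set N : Matrix (Fin n) (Fin n) (∀ i, F i) := (M : Matrix (Fin n) (Fin n) (∀ i, F i))
        with hNdef
      have hcolu : ∀ i : I, ∃ x : Fin n, N x kF i ≠ 0 := by
        intro i
        by_contra hcon
        push_neg at hcon
        have hdet : N.det = 1 := hNdef ▸ M.2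
        have h1 : (Pi.evalRingHom F i) N.det = 1 := by rw [hdet]; exact map_one _
        rw [RingHom.map_det, RingHom.mapMatrix_apply] at h1
        have h0 : (N.map (Pi.evalRingHom F i)).det = 0 :=
          Matrix.det_eq_zero_of_column_eq_zero kF (fun x => by simpa using hcon x)
        rw [h0] at h1
        exact zero_ne_one h1
      let supp : I → Finset (Fin n) := fun i => Finset.univ.filter (fun x => N x kF i ≠ 0)
      have hsupp : ∀ i, (supp i).Nonempty := fun i => by
        obtain ⟨x, hx⟩ := hcolu i
        exact ⟨x, by simp [supp, hx]⟩
      let x0 : I → Fin n := fun i => (supp i).min' (hsupp i)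
      have hx0 : ∀ i, N (x0 i) kF i ≠ 0 := fun i => by
        have := (supp i).min'_mem (hsupp i)
        simpa [supp] using this
      have hx0k : ∀ i, (kF : Fin n) ≤ x0 i := by
        intro i
        by_contra h
        push_neg at h
        have hlt : (x0 i).val < k := h
        have hne : x0 i ≠ kF := Fin.ne_of_lt h
        have hz := hM (x0 i) kF (Or.inl hlt)
        rw [if_neg hne] at hz
        exact hx0 i (by rw [hz]; rfl)
      have hminle : ∀ (i : I) (x : Fin n), N x kF i ≠ 0 → x0 i ≤ x := fun i x hx =>
        Finset.min'_le _ _ (by simp [supp, hx])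
      let c : Fin n → (∀ i, F i) := fun x i => if x = x0 i ∧ x ≠ kF then (N (x0 i) kF i)⁻¹ else 0
      have hck : c kF = 0 := funext fun i => by simp [c]
      have hclt : ∀ x : Fin n, x.val < k → c x = 0 := by
        intro x hx
        funext i
        have hne : ¬(x = x0 i ∧ x ≠ kF) := by
          rintro ⟨he, -⟩
          have h2 : (kF : Fin n) ≤ x := he ▸ hx0k i
          have h3 : k ≤ x.val := h2
          omega
        simp [c, hne]
      obtain ⟨p1, hp1H, hp1⟩ := row_mem H hS kF c hck
      set N1 : Matrix (Fin n) (Fin n) (∀ i, F i) := (p1 : Matrix (Fin n) (Fin n) (∀ i, F i)) * N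
        with hN1def
      have e1 : ∀ a b, N1 a b = N a b + if a = kF then ∑ x, c x * N x b else 0 := by
        intro a b
        rw [hN1def, hp1]
        exact rowmat_mul_entry kF c N a b
      set u : ∀ i, F i := N1 kF kF with hudef
      have hu0 : ∀ i, u i ≠ 0 := by
        intro i
        have hui : u i = N kF kF i + ∑ x, c x i * N x kF i := by
          rw [hudef, e1 kF kF, if_pos rfl, Pi.add_apply]
          congr 1
          rw [Finset.sum_apply]
          exact Finset.sum_congr rfl fun x _ => rfl
        by_cases hx0i : x0 i = kF
        · have hz : ∀ x : Fin n, c x i = 0 := by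
            intro x
            by_cases hxx : x = x0 i
            · simp [c, hxx, hx0i]
            · simp [c, hxx]
          rw [hui, Finset.sum_eq_zero (fun x _ => by rw [hz x, zero_mul]), add_zero]
          have hx := hx0 i
          rw [hx0i] at hx
          exact hx
        · have hNkk : N kF kF i = 0 := by
            by_contra hne
            have h1 := hminle i kF hne
            exact hx0i (le_antisymm h1 (hx0k i))
          have hsum : ∑ x, c x i * N x kF i = 1 := by
            rw [Finset.sum_eq_single (x0 i)]
            · have hcx : c (x0 i) i = (N (x0 i) kF i)⁻¹ := by
                simp [c, hx0i]
              rw [hcx, inv_mul_cancel₀ (hx0 i)]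
            · intro x _ hxne
              simp [c, hxne]
            · intro hmem
              exact absurd (Finset.mem_univ _) hmem
          rw [hui, hNkk, hsum, zero_add]
          exact one_ne_zero
      set uI : ∀ i, F i := fun i => (u i)⁻¹ with huIdef
      have huuI : u * uI = 1 := funext fun i => mul_inv_cancel₀ (hu0 i)
      have huIu : uI * u = 1 := by rw [mul_comm]; exact huuI
      have hId1 : ∀ a b : Fin n, (a.val < k ∨ b.val < k) → N1 a b = if a = b then 1 else 0 := by
        intro a b h
        rw [e1]
        by_cases hak : a = kF
        · subst hak
          have hb : b.val < k := by
            rcases h with h | h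
            · exact absurd h (by simp [kF])
            · exact h
          have hbne : kF ≠ b := by
            intro he
            rw [← he] at hb
            simp [kF] at hb
          rw [if_pos rfl, hM kF b (Or.inr hb), if_neg hbne]
          have hterm : ∀ x : Fin n, c x * N x b = if x = b then c x else 0 := by
            intro x
            rw [hM x b (Or.inr hb)]
            by_cases hxb : x = b <;> simp [hxb]
          rw [Finset.sum_congr rfl (fun x _ => hterm x), Finset.sum_ite_eq' Finset.univ b c,
            if_pos (Finset.mem_univ b), hclt b hb]
          simp
        · rw [if_neg hak, add_zero]
          exact hM a b h
      set w : Fin n → (∀ i, F i) := fun a => if a = kF then 0 else -(N1 a kF * uI) with hwdef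
      obtain ⟨p2, hp2H, hp2⟩ := col_mem H hS kF w (by simp [w])
      set N2 : Matrix (Fin n) (Fin n) (∀ i, F i) := (p2 : Matrix (Fin n) (Fin n) (∀ i, F i)) * N1
        with hN2def
      have e2 : ∀ a b, N2 a b = N1 a b + w a * N1 kF b := by
        intro a b
        rw [hN2def, hp2]
        exact colmat_mul_entry kF w N1 a b
      have hrow2 : ∀ b, N2 kF b = N1 kF b := by
        intro b
        rw [e2]
        simp [w]
      have hpiv2 : N2 kF kF = u := by rw [hrow2 kF]
      have hcol2 : ∀ a, a ≠ kF → N2 a kF = 0 := by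
        intro a ha
        rw [e2]
        have hw : w a = -(N1 a kF * uI) := by simp [w, ha]
        rw [hw, ← hudef, neg_mul, mul_assoc, huIu, mul_one, add_neg_cancel]
      have hId2 : ∀ a b : Fin n, (a.val < k ∨ b.val < k) → N2 a b = if a = b then 1 else 0 := by
        intro a b h
        rw [e2]
        rcases h with h | h
        · have hak : a ≠ kF := by
            intro he
            rw [he] at h
            simp [kF] at h
          have hN1a : N1 a kF = 0 := by
            rw [hId1 a kF (Or.inl h), if_neg hak]
          have hw : w a = 0 := by simp [w, hak, hN1a]
          rw [hw, zero_mul, add_zero]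
          exact hId1 a b (Or.inl h)
        · have hbk : kF ≠ b := by
            intro he
            rw [← he] at h
            simp [kF] at h
          have hN1b : N1 kF b = 0 := by
            rw [hId1 kF b (Or.inr h), if_neg hbk]
          rw [hN1b, mul_zero, add_zero]
          exact hId1 a b (Or.inr h)
      set v2 : Fin n → (∀ i, F i) := fun b => if b = kF then 0 else -(uI * N2 kF b) with hv2def
      obtain ⟨p3, hp3H, hp3⟩ := row_mem H hS kF v2 (by simp [v2])
      set N3 : Matrix (Fin n) (Fin n) (∀ i, F i) := N2 * (p3 : Matrix (Fin n) (Fin n) (∀ i, F i))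
        with hN3def
      have e3 : ∀ a b, N3 a b = N2 a b + N2 a kF * v2 b := by
        intro a b
        rw [hN3def, hp3]
        exact mul_rowmat_entry kF v2 N2 a b
      have hcol3 : ∀ a, a ≠ kF → N3 a kF = 0 := by
        intro a ha
        rw [e3, hcol2 a ha]
        simp
      have hpiv3 : N3 kF kF = u := by
        rw [e3]
        have hv : v2 kF = 0 := by simp [v2]
        rw [hv, mul_zero, add_zero, hpiv2]
      have hrow3 : ∀ b, b ≠ kF → N3 kF b = 0 := by
        intro b hb
        rw [e3, hpiv2]
        have hv : v2 b = -(uI * N2 kF b) := by simp [v2, hb]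
        rw [hv, mul_neg, ← mul_assoc, huuI, one_mul, add_neg_cancel]
      have hId3 : ∀ a b : Fin n, (a.val < k ∨ b.val < k) → N3 a b = if a = b then 1 else 0 := by
        intro a b h
        rw [e3]
        rcases h with h | h
        · have hak : a ≠ kF := by
            intro he
            rw [he] at h
            simp [kF] at h
          have hz : N2 a kF = 0 := by
            rw [hId2 a kF (Or.inl h), if_neg hak]
          rw [hz, zero_mul, add_zero]
          exact hId2 a b (Or.inl h)
        · have hbk : kF ≠ b := by
            intro he
            rw [← he] at h
            simp [kF] at h
          have hbk' : b ≠ kF := Ne.symm hbk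
          have hv : v2 b = 0 := by
            have hN2b : N2 kF b = 0 := by
              rw [hId2 kF b (Or.inr h), if_neg hbk]
            simp [v2, hbk', hN2b]
          rw [hv, mul_zero, add_zero]
          exact hId2 a b (Or.inr h)
      set N4 : Matrix (Fin n) (Fin n) (∀ i, F i) := Matrix.transvection k1 kF uI * N3 with hN4def
      have e4 : ∀ a b, N4 a b = N3 a b + if a = k1 then uI * N3 kF b else 0 := fun a b =>
        transvection_mul_entry k1 kF uI N3 a b
      set N5 : Matrix (Fin n) (Fin n) (∀ i, F i) := Matrix.transvection kF k1 (1 - u) * N4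
        with hN5def
      have e5 : ∀ a b, N5 a b = N4 a b + if a = kF then (1 - u) * N4 k1 b else 0 := fun a b =>
        transvection_mul_entry kF k1 (1 - u) N4 a b
      set N6 : Matrix (Fin n) (Fin n) (∀ i, F i) := Matrix.transvection k1 kF (-1) * N5
        with hN6def
      have e6 : ∀ a b, N6 a b = N5 a b + if a = k1 then -1 * N5 kF b else 0 := fun a b =>
        transvection_mul_entry k1 kF (-1) N5 a b
      set N7 : Matrix (Fin n) (Fin n) (∀ i, F i) :=
        Matrix.transvection kF k1 (-((1 - u) * uI)) * N6 with hN7def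
      have e7 : ∀ a b, N7 a b = N6 a b + if a = kF then -((1 - u) * uI) * N6 k1 b else 0 :=
        fun a b => transvection_mul_entry kF k1 (-((1 - u) * uI)) N6 a b
      have hN4k1kF : N4 k1 kF = 1 := by
        rw [e4, if_pos rfl, hcol3 k1 (Ne.symm hkk1), hpiv3, zero_add, huIu]
      have hN4k1 : ∀ b, b ≠ kF → N4 k1 b = N3 k1 b := by
        intro b hb
        rw [e4, if_pos rfl, hrow3 b hb, mul_zero, add_zero]
      have hN4row : ∀ a, a ≠ k1 → ∀ b, N4 a b = N3 a b := by
        intro a ha b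
        rw [e4, if_neg ha, add_zero]
      have hN5kFkF : N5 kF kF = 1 := by
        rw [e5, if_pos rfl, hN4row kF hkk1 kF, hpiv3, hN4k1kF, mul_one]
        ring
      have hN5kF : ∀ b, b ≠ kF → N5 kF b = (1 - u) * N3 k1 b := by
        intro b hb
        rw [e5, if_pos rfl, hN4row kF hkk1 b, hrow3 b hb, zero_add, hN4k1 b hb]
      have hN5row : ∀ a, a ≠ kF → ∀ b, N5 a b = N4 a b := by
        intro a ha b
        rw [e5, if_neg ha, add_zero]
      have hN6k1kF : N6 k1 kF = 0 := by
        rw [e6, if_pos rfl, hN5row k1 (Ne.symm hkk1) kF, hN4k1kF, hN5kFkF]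
        ring
      have hN6k1 : ∀ b, b ≠ kF → N6 k1 b = u * N3 k1 b := by
        intro b hb
        rw [e6, if_pos rfl, hN5row k1 (Ne.symm hkk1) b, hN4k1 b hb, hN5kF b hb]
        ring
      have hN6row : ∀ a, a ≠ k1 → ∀ b, N6 a b = N5 a b := by
        intro a ha b
        rw [e6, if_neg ha, add_zero]
      have hN7kFkF : N7 kF kF = 1 := by
        rw [e7, if_pos rfl, hN6row kF hkk1 kF, hN5kFkF, hN6k1kF, mul_zero, add_zero]
      have hN7kF : ∀ b, b ≠ kF → N7 kF b = 0 := by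
        intro b hb
        rw [e7, if_pos rfl, hN6row kF hkk1 b, hN5kF b hb, hN6k1 b hb]
        linear_combination (-((1 : ∀ i, F i) - u) * N3 k1 b) * huIu
      have hN7row : ∀ a, a ≠ kF → ∀ b, N7 a b = N6 a b := by
        intro a ha b
        rw [e7, if_neg ha, add_zero]
      have hId7 : ∀ a b : Fin n, (a.val < k + 1 ∨ b.val < k + 1) →
          N7 a b = if a = b then 1 else 0 := by
        intro a b h
        by_cases hak : a = kF
        · subst hak
          by_cases hbk : kF = b
          · rw [← hbk, hN7kFkF, if_pos rfl]
          · rw [hN7kF b (Ne.symm hbk), if_neg hbk]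
        · by_cases hak1 : a = k1
          · subst hak1
            have hb : b.val < k + 1 := by
              rcases h with h | h
              · exact absurd h (by simp [k1])
              · exact h
            by_cases hbkF : b = kF
            · rw [hbkF, hN7row k1 (Ne.symm hkk1) kF, hN6k1kF, if_neg (Ne.symm hkk1)]
            · have hbk : b.val < k := by
                have hbv : b.val ≠ k := fun hbe =>
                  hbkF (Fin.ext (show b.val = (kF : Fin n).val from hbe))
                omega
              have hbne : k1 ≠ b := by
                intro he
                rw [← he] at hbk
                simp [k1] at hbk
              rw [hN7row k1 (Ne.symm hkk1) b, hN6k1 b hbkF,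
                hId3 k1 b (Or.inr hbk)]
              simp [hbne]
          · have h37 : N7 a b = N3 a b := by
              rw [hN7row a hak b, hN6row a hak1 b, hN5row a hak b, hN4row a hak1 b]
            rw [h37]
            rcases h with h | h
            · have hlt : a.val < k := by
                have hav : a.val ≠ k := fun hae =>
                  hak (Fin.ext (show a.val = (kF : Fin n).val from hae))
                have hav1 : a.val ≠ k + 1 := fun hae =>
                  hak1 (Fin.ext (show a.val = (k1 : Fin n).val from hae))
                omega
              exact hId3 a b (Or.inl hlt)
            · by_cases hbkF : b = kF
              · rw [hbkF, hcol3 a hak, if_neg hak]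
              · have hbk : b.val < k := by
                  have hbv : b.val ≠ k := fun hbe =>
                    hbkF (Fin.ext (show b.val = (kF : Fin n).val from hbe))
                  omega
                exact hId3 a b (Or.inr hbk)
      set t1 : SL n F := elt k1 kF (Ne.symm hkk1) uI with ht1
      set t2 : SL n F := elt kF k1 hkk1 (1 - u) with ht2
      set t3 : SL n F := elt k1 kF (Ne.symm hkk1) (-1) with ht3
      set t4 : SL n F := elt kF k1 hkk1 (-((1 - u) * uI)) with ht4
      set g7 : SL n F := t4 * (t3 * (t2 * (t1 * (p2 * (p1 * M) * p3)))) with hg7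
      have hg7coe : (g7 : Matrix (Fin n) (Fin n) (∀ i, F i)) = N7 := by
        rw [hg7]
        simp only [Matrix.SpecialLinearGroup.coe_mul, ht1, ht2, ht3, ht4, elt_coe]
        try rw [hN7def, hN6def, hN5def, hN4def, hN3def, hN2def, hN1def, hNdef]
        try rfl
      have hg7mem : g7 ∈ H := by
        refine ih (k + 1) (by omega) g7 ?_
        intro a b h
        rw [hg7coe]
        exact hId7 a b h
      have hMeq : M = p1⁻¹ * (p2⁻¹ * (t1⁻¹ * (t2⁻¹ * (t3⁻¹ * (t4⁻¹ * g7 * p3⁻¹))))) := by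
        rw [hg7]
        group
      rw [hMeq]
      exact mul_mem (inv_mem hp1H) (mul_mem (inv_mem hp2H) (mul_mem (inv_mem (hS _ _ _ _))
        (mul_mem (inv_mem (hS _ _ _ _)) (mul_mem (inv_mem (hS _ _ _ _))
          (mul_mem (mul_mem (inv_mem (hS _ _ _ _)) hg7mem) (inv_mem hp3H))))))

end

end Stmt10

/-- Let `A = ∏ i, F i` be a product of fields.  Then `SL(n, A)` is generated
by its elementary transvections `1 + c • E j k` (`j ≠ k`), where `E j k` is
the matrix with a single `1` in position `(j, k)` and `0` elsewhere. -/
theorem stmt10 (n : ℕ) (hn : 2 ≤ n) (I : Type*) (F : I → Type*)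
    [∀ i, Field (F i)] :
    Subgroup.closure
        {M : Matrix.SpecialLinearGroup (Fin n) (∀ i, F i) |
          ∃ (j k : Fin n) (c : ∀ i, F i), j ≠ k ∧
            (M : Matrix (Fin n) (Fin n) (∀ i, F i))
              = 1 + Matrix.single j k c}
      = ⊤ := by
  rw [eq_top_iff]
  intro M _
  exact Stmt10.main _ (fun j k h c =>
    Subgroup.subset_closure (Set.mem_setOf.mpr ⟨j, k, c, h, rfl⟩)) hn M
end

section
/- There exists a function φ : ℤ → ℤ with the following two properties: (1) for every positive integer N and all integers m, n, if N divides m − n then N divides φ(m) − φ(n) (so φ descends to a well-defined map ℤ/N → ℤ/N for every N); and (2) φ is not a polynomial function, i.e., there is no polynomial P with rational coefficients such that φ(n) = P(n) for all n ∈ ℤ. -/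
open Polynomial Finset

/-- `F x = ∑_{i ≤ x} x(x-1)⋯(x-i+1)`, a "Mahler series" with all coefficients 1. -/
def Ffun (x : ℕ) : ℕ := ∑ i ∈ Finset.range (x + 1), x.descFactorial i

lemma Ffun_extend (x M : ℕ) (h : x < M) :
    Ffun x = ∑ i ∈ Finset.range M, x.descFactorial i := by
  refine Finset.sum_subset (Finset.range_subset_range.mpr (by omega)) ?_
  intro i hi hni
  simp only [Finset.mem_range] at hi hni
  exact (Nat.descFactorial_eq_zero_iff_lt).mpr (by omega)

lemma Ffun_congr (N x y : ℕ) (h : ((x : ZMod N)) = (y : ZMod N)) :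
    ((Ffun x : ZMod N)) = (Ffun y : ZMod N) := by
  rw [Ffun_extend x (max x y + 1) (by omega), Ffun_extend y (max x y + 1) (by omega)]
  push_cast
  refine Finset.sum_congr rfl fun i _ => ?_
  rw [← descPochhammer_eval_eq_descFactorial (ZMod N) x i,
    ← descPochhammer_eval_eq_descFactorial (ZMod N) y i, h]

lemma factorial_le_Ffun (x : ℕ) : x.factorial ≤ Ffun x := by
  have := Finset.single_le_sum (f := fun i => x.descFactorial i)
    (fun i _ => Nat.zero_le _) (Finset.self_mem_range_succ x)
  simpa [Nat.descFactorial_self, Ffun] using this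

/-- There is a non-polynomial function `φ : ℤ → ℤ` which commutes with all
reductions: for every positive integer `N`, if `N ∣ m - n` then
`N ∣ φ m - φ n` (so `φ` descends to a map `ℤ/N → ℤ/N` for every `N`), yet
there is no polynomial `P` with rational coefficients with `φ n = P n` for
all integers `n`. -/
theorem stmt11 :
    ∃ φ : ℤ → ℤ,
      (∀ N : ℕ, 0 < N → ∀ m n : ℤ, (N : ℤ) ∣ m - n → (N : ℤ) ∣ φ m - φ n) ∧
      ¬ ∃ P : Polynomial ℚ, ∀ n : ℤ, (φ n : ℚ) = P.eval (n : ℚ) := by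
  refine ⟨fun n => (Ffun ((n ^ 2).toNat) : ℤ), ?_, ?_⟩
  · intro N hN m n h
    haveI : NeZero N := ⟨hN.ne'⟩
    rw [← ZMod.intCast_zmod_eq_zero_iff_dvd]
    push_cast
    rw [sub_eq_zero]
    apply Ffun_congr
    have hm : (((m ^ 2).toNat : ℤ)) = m ^ 2 := Int.toNat_of_nonneg (sq_nonneg m)
    have hn' : (((n ^ 2).toNat : ℤ)) = n ^ 2 := Int.toNat_of_nonneg (sq_nonneg n)
    have hmn : (m : ZMod N) = (n : ZMod N) := by
      rw [ZMod.intCast_eq_intCast_iff]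
      exact Int.ModEq.symm (Int.modEq_iff_dvd.mpr (by simpa using h))
    calc (((m ^ 2).toNat : ℕ) : ZMod N) = (((m ^ 2).toNat : ℤ) : ZMod N) := by push_cast; ring
      _ = ((m : ZMod N)) ^ 2 := by rw [hm]; push_cast; ring
      _ = ((n : ZMod N)) ^ 2 := by rw [hmn]
      _ = (((n ^ 2).toNat : ℤ) : ZMod N) := by rw [hn']; push_cast; ring
      _ = (((n ^ 2).toNat : ℕ) : ZMod N) := by push_cast; ring
  · rintro ⟨P, hP⟩
    set d := P.natDegree with hd
    set C : ℚ := ∑ i ∈ Finset.range (d + 1), |P.coeff i| with hCdef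
    have hC : 0 ≤ C := Finset.sum_nonneg fun i _ => abs_nonneg _
    -- polynomial growth bound
    have hbound : ∀ n : ℕ, 1 ≤ n → P.eval (n : ℚ) ≤ C * (n : ℚ) ^ d := by
      intro n hn
      calc P.eval (n:ℚ) ≤ |∑ i ∈ Finset.range (d + 1), P.coeff i * (n : ℚ) ^ i| := by
            rw [Polynomial.eval_eq_sum_range]; exact le_abs_self _
        _ ≤ ∑ i ∈ Finset.range (d + 1), |P.coeff i * (n : ℚ) ^ i| :=
            Finset.abs_sum_le_sum_abs _ _
        _ ≤ ∑ i ∈ Finset.range (d + 1), |P.coeff i| * (n : ℚ) ^ d := by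
            refine Finset.sum_le_sum fun i hi => ?_
            rw [abs_mul, abs_pow, abs_of_nonneg (by positivity : (0:ℚ) ≤ (n:ℚ))]
            refine mul_le_mul_of_nonneg_left ?_ (abs_nonneg _)
            exact pow_le_pow_right₀ (by exact_mod_cast hn) (by
              simpa using Nat.lt_succ_iff.mp (Finset.mem_range.mp hi))
        _ = C * (n : ℚ) ^ d := by rw [hCdef, Finset.sum_mul]
    obtain ⟨n₀, hn₀⟩ := Filter.eventually_atTop.mp
      (FloorSemiring.eventually_mul_pow_lt_factorial_sub C ((2 : ℚ) ^ d) 0)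
    set n : ℕ := max n₀ 1 with hndef
    have hn1 : 1 ≤ n := le_max_right _ _
    have h3 : C * ((2 : ℚ) ^ d) ^ n < ((n : ℕ).factorial : ℚ) := by
      simpa using hn₀ n (le_max_left _ _)
    have h4 : (n : ℚ) ^ d ≤ ((2 : ℚ) ^ d) ^ n := by
      have : n ^ d ≤ (2 ^ d) ^ n := by
        calc n ^ d ≤ (2 ^ n) ^ d := Nat.pow_le_pow_left (Nat.lt_two_pow_self (n := n)).le d
          _ = (2 ^ d) ^ n := by rw [← pow_mul, ← pow_mul, Nat.mul_comm]
      exact_mod_cast this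
    have h5 : (Ffun (n ^ 2) : ℚ) = P.eval (n : ℚ) := by
      have := hP (n : ℤ)
      dsimp only at this
      have htn : (((n : ℤ) ^ 2).toNat) = n ^ 2 := by
        rw [show ((n:ℤ)^2) = ((n ^ 2 : ℕ) : ℤ) by push_cast; ring, Int.toNat_natCast]
      rw [htn] at this
      push_cast at this ⊢
      exact this
    have h6 : ((n.factorial : ℕ) : ℚ) ≤ (Ffun (n ^ 2) : ℚ) := by
      have : n.factorial ≤ Ffun (n ^ 2) :=
        le_trans (Nat.factorial_le (Nat.le_self_pow two_ne_zero n)) (factorial_le_Ffun _)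
      exact_mod_cast this
    have : (Ffun (n ^ 2) : ℚ) < (Ffun (n ^ 2) : ℚ) := by
      calc (Ffun (n ^ 2) : ℚ) = P.eval (n : ℚ) := h5
        _ ≤ C * (n : ℚ) ^ d := hbound n hn1
        _ ≤ C * ((2 : ℚ) ^ d) ^ n := mul_le_mul_of_nonneg_left h4 hC
        _ < (n.factorial : ℚ) := h3
        _ ≤ (Ffun (n ^ 2) : ℚ) := h6
    exact lt_irrefl _ this
end
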